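/- arXiv:2412.06220 — 2 statements merged into one kernel-verified Lean document; each statement's English description precedes it below -/
import Mathlib

section
/- Asymptotic unbiasedness of the estimator: suppose d(·,g) is continuous with respect to the sup-norm in its first argument and bounded above uniformly by a constant M for all CDFs g. Then E[Δ̂(X,Y)] → Δ(X,Y) as N → ∞, i.e., the estimator Δ̂(X,Y) is asymptotically unbiased. -/
open MeasureTheory ProbabilityTheory Filter

/-- A function `f : ℝ → ℝ` is a CDF of a real-valued random variable if it is
`t ↦ P(Z ≤ t)` for some real-valued random variable `Z`, equivalently
`t ↦ ν (Iic t)` for some probability measure `ν` on `ℝ`. -/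
def IsCDF (f : ℝ → ℝ) : Prop :=
  ∃ ν : Measure ℝ, IsProbabilityMeasure ν ∧ ∀ t, f t = (ν (Set.Iic t)).toReal

/-- The CDF `t ↦ ν {y | qᵀ y ≤ t}` of the one-dimensional projection along `q` of a
distribution `ν` on `ℝⁿ`. -/
noncomputable def measProjCDF {n : ℕ} (ν : Measure (EuclideanSpace ℝ (Fin n)))
    (q : EuclideanSpace ℝ (Fin n)) (t : ℝ) : ℝ :=
  (ν {y | (inner ℝ q y : ℝ) ≤ t}).toReal

/-- The empirical CDF `F̂_X^{q,N}(t) = (1/N) ∑_{j=1}^N 1(qᵀ X_j ≤ t)` of `N` projected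
samples. -/
noncomputable def empProjCDF {n : ℕ} {Ω : Type*} (q : Ω → EuclideanSpace ℝ (Fin n))
    (X : ℕ → Ω → EuclideanSpace ℝ (Fin n)) (N : ℕ) (ω : Ω) (t : ℝ) : ℝ :=
  (∑ j ∈ Finset.range N, if (inner ℝ (q ω) (X j ω) : ℝ) ≤ t then (1 : ℝ) else 0) / N

namespace SWGC
open Set


noncomputable def eCDF (w : ℕ → ℝ) (N : ℕ) (t : ℝ) : ℝ :=
  (∑ j ∈ Finset.range N, if w j ≤ t then (1:ℝ) else 0) / N

noncomputable def eCDFlt (w : ℕ → ℝ) (N : ℕ) (t : ℝ) : ℝ :=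
  (∑ j ∈ Finset.range N, if w j < t then (1:ℝ) else 0) / N

private lemma div_cast_le_div_cast {a b : ℝ} (N : ℕ) (h : a ≤ b) : a / N ≤ b / N := by
  rw [div_eq_mul_inv, div_eq_mul_inv]
  exact mul_le_mul_of_nonneg_right h (by positivity)

lemma eCDF_nonneg (w : ℕ → ℝ) (N : ℕ) (t : ℝ) : 0 ≤ eCDF w N t := by
  apply div_nonneg _ (Nat.cast_nonneg N)
  exact Finset.sum_nonneg fun j _ => by split <;> norm_num

lemma eCDF_le_one (w : ℕ → ℝ) (N : ℕ) (t : ℝ) : eCDF w N t ≤ 1 := by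
  rcases Nat.eq_zero_or_pos N with h | h
  · simp [eCDF, h]
  · rw [eCDF, div_le_one (by positivity)]
    calc (∑ j ∈ Finset.range N, if w j ≤ t then (1:ℝ) else 0)
        ≤ ∑ _j ∈ Finset.range N, 1 := by
          apply Finset.sum_le_sum; intros; split <;> norm_num
      _ = N := by simp

lemma eCDF_mono (w : ℕ → ℝ) (N : ℕ) : Monotone (eCDF w N) := by
  intro s t hst
  apply div_cast_le_div_cast
  apply Finset.sum_le_sum
  intro j _
  by_cases h : w j ≤ s
  · simp [h, h.trans hst]
  · simp only [if_neg h]; split <;> norm_num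

lemma eCDFlt_le_eCDF (w : ℕ → ℝ) (N : ℕ) (t : ℝ) : eCDFlt w N t ≤ eCDF w N t := by
  apply div_cast_le_div_cast
  apply Finset.sum_le_sum
  intro j _
  by_cases h : w j < t
  · simp [h, h.le]
  · simp only [if_neg h]; split <;> norm_num

lemma eCDF_le_eCDFlt (w : ℕ → ℝ) (N : ℕ) {s t : ℝ} (hst : s < t) :
    eCDF w N s ≤ eCDFlt w N t := by
  apply div_cast_le_div_cast
  apply Finset.sum_le_sum
  intro j _
  by_cases h : w j ≤ s
  · simp [h, h.trans_lt hst]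
  · simp only [if_neg h]; split <;> norm_num

lemma eCDFlt_nonneg (w : ℕ → ℝ) (N : ℕ) (t : ℝ) : 0 ≤ eCDFlt w N t := by
  apply div_nonneg _ (Nat.cast_nonneg N)
  exact Finset.sum_nonneg fun j _ => by split <;> norm_num


noncomputable def mF (ρ : Measure ℝ) (t : ℝ) : ℝ := (ρ (Iic t)).toReal
noncomputable def mFlt (ρ : Measure ℝ) (t : ℝ) : ℝ := (ρ (Iio t)).toReal

variable (ρ : Measure ℝ) [IsProbabilityMeasure ρ]

lemma mF_eq_cdf (t : ℝ) : mF ρ t = cdf ρ t := (cdf_eq_real ρ t).symm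

lemma mF_nonneg (t : ℝ) : 0 ≤ mF ρ t := ENNReal.toReal_nonneg

lemma mF_le_one (t : ℝ) : mF ρ t ≤ 1 := by
  rw [mF_eq_cdf]; exact cdf_le_one ρ t

lemma mF_mono : Monotone (mF ρ) := by
  intro s t hst
  exact ENNReal.toReal_mono (measure_ne_top ρ _) (measure_mono (Iic_subset_Iic.2 hst))

lemma mFlt_le_mF (t : ℝ) : mFlt ρ t ≤ mF ρ t :=
  ENNReal.toReal_mono (measure_ne_top ρ _) (measure_mono Iio_subset_Iic_self)

lemma mF_le_mFlt {s t : ℝ} (hst : s < t) : mF ρ s ≤ mFlt ρ t :=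
  ENNReal.toReal_mono (measure_ne_top ρ _) (measure_mono fun x hx => lt_of_le_of_lt hx hst)

lemma mFlt_nonneg (t : ℝ) : 0 ≤ mFlt ρ t := ENNReal.toReal_nonneg

lemma mFlt_le_one (t : ℝ) : mFlt ρ t ≤ 1 := (mFlt_le_mF ρ t).trans (mF_le_one ρ t)

noncomputable def quant (ρ : Measure ℝ) (p : ℝ) : ℝ := sInf {t | p ≤ mF ρ t}

lemma quant_set_nonempty {p : ℝ} (hp1 : p < 1) : {t | p ≤ mF ρ t}.Nonempty := by
  have h := (tendsto_cdf_atTop ρ).eventually_const_le hp1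
  obtain ⟨t, ht⟩ := h.exists
  exact ⟨t, by rw [mem_setOf_eq, mF_eq_cdf]; exact ht⟩

lemma quant_set_bddBelow {p : ℝ} (hp0 : 0 < p) : BddBelow {t | p ≤ mF ρ t} := by
  have h := (tendsto_cdf_atBot ρ).eventually_lt_const hp0
  obtain ⟨t0, ht0⟩ := h.exists
  refine ⟨t0, fun t ht => ?_⟩
  by_contra hlt
  push_neg at hlt
  have h2 : mF ρ t ≤ mF ρ t0 := mF_mono ρ hlt.le
  rw [← mF_eq_cdf] at ht0
  exact absurd (ht.trans h2) (not_le.2 ht0)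

lemma quant_upper {p : ℝ} (hp0 : 0 < p) (hp1 : p < 1) : p ≤ mF ρ (quant ρ p) := by
  have hne := quant_set_nonempty ρ hp1
  have hbdd := quant_set_bddBelow ρ hp0
  have key : ∀ t, quant ρ p < t → p ≤ mF ρ t := by
    intro t ht
    obtain ⟨s, hs, hst⟩ := (csInf_lt_iff hbdd hne).1 ht
    exact hs.trans (mF_mono ρ hst.le)
  rw [mF_eq_cdf]
  have hcont : Tendsto (cdf ρ) (nhdsWithin (quant ρ p) (Ioi (quant ρ p)))
      (nhds (cdf ρ (quant ρ p))) :=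
    ((cdf ρ).right_continuous (quant ρ p)).mono_left (nhdsWithin_mono _ Ioi_subset_Ici_self)
  refine ge_of_tendsto hcont ?_
  filter_upwards [self_mem_nhdsWithin] with t ht
  rw [← mF_eq_cdf]
  exact key t ht

lemma quant_lower {p : ℝ} (hp0 : 0 < p) (hp1 : p < 1) : mFlt ρ (quant ρ p) ≤ p := by
  have hbdd := quant_set_bddBelow ρ hp0
  set τ := quant ρ p with hτ
  have hUnion : Iio τ = ⋃ k : ℕ, Iic (τ - 1/(k+1)) := by
    ext x
    simp only [mem_Iio, mem_iUnion, mem_Iic]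
    constructor
    · intro hx
      obtain ⟨k, hk⟩ := exists_nat_one_div_lt (sub_pos.2 hx)
      exact ⟨k, by linarith⟩
    · rintro ⟨k, hk⟩
      have : (0:ℝ) < 1/(k+1) := by positivity
      linarith
  have hmono : Monotone (fun k : ℕ => Iic (τ - 1/(k+1))) := by
    intro a b hab
    apply Iic_subset_Iic.2
    have hcast : (a:ℝ) ≤ b := Nat.cast_le.2 hab
    have : (1:ℝ)/(b+1) ≤ 1/(a+1) := one_div_le_one_div_of_le (by positivity) (by linarith)
    linarith
  have htend : Tendsto (fun k : ℕ => ρ (Iic (τ - 1/(k+1)))) atTop (nhds (ρ (Iio τ))) := by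
    rw [hUnion]
    exact tendsto_measure_iUnion_atTop hmono
  have htendR : Tendsto (fun k : ℕ => (ρ (Iic (τ - 1/(k+1)))).toReal) atTop
      (nhds (ρ (Iio τ)).toReal) :=
    (ENNReal.tendsto_toReal (measure_ne_top ρ _)).comp htend
  refine le_of_tendsto htendR (Eventually.of_forall fun k => ?_)
  have hlt : τ - 1/(k+1) < τ := by
    have : (0:ℝ) < 1/(k+1) := by positivity
    linarith
  have hnotmem : τ - 1/(k+1) ∉ {t | p ≤ mF ρ t} := by
    intro hmem
    exact absurd (csInf_le hbdd hmem) (not_le.2 hlt)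
  simp only [mem_setOf_eq, not_le] at hnotmem
  exact (le_of_lt hnotmem)

lemma quant_mono {p p' : ℝ} (hp0 : 0 < p) (hp1' : p' < 1) (hpp' : p ≤ p') :
    quant ρ p ≤ quant ρ p' :=
  csInf_le_csInf (quant_set_bddBelow ρ hp0) (quant_set_nonempty ρ hp1')
    (fun t ht => le_trans hpp' ht)


section GridBound
variable (ρ : Measure ℝ) [IsProbabilityMeasure ρ]

lemma grid_bound (E Elt : ℝ → ℝ)
    (hE0 : ∀ t, 0 ≤ E t) (hE1 : ∀ t, E t ≤ 1) (hEm : Monotone E)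
    (hEup : ∀ {s t : ℝ}, s < t → E s ≤ Elt t) (hEltle : ∀ t, Elt t ≤ E t)
    (m : ℕ) (hm : 1 ≤ m) (δ : ℝ) (hδ0 : 0 ≤ δ)
    (hgrid : ∀ k, 1 ≤ k → k ≤ m - 1 →
      |E (quant ρ ((k:ℝ)/m)) - mF ρ (quant ρ ((k:ℝ)/m))| ≤ δ ∧
      |Elt (quant ρ ((k:ℝ)/m)) - mFlt ρ (quant ρ ((k:ℝ)/m))| ≤ δ)
    (t : ℝ) : |E t - mF ρ t| ≤ δ + 1/m := by
  have hm0 : (0:ℝ) < m := by exact_mod_cast hm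
  set τ : ℕ → ℝ := fun k => quant ρ ((k:ℝ)/m) with hτdef
  set K : Finset ℕ := (Finset.Icc 1 (m-1)).filter (fun k => τ k ≤ t) with hKdef
  set a : ℕ := if h : K.Nonempty then K.max' h else 0 with hadef
  have hKle : ∀ k ∈ K, k ≤ a := by
    intro k hk
    rw [hadef, dif_pos ⟨k, hk⟩]
    exact K.le_max' k hk
  have haK : K.Nonempty → a ∈ K := by
    intro h
    rw [hadef, dif_pos h]
    exact K.max'_mem h
  -- bounds for grid indices
  have hp : ∀ k : ℕ, 1 ≤ k → k ≤ m - 1 → (0:ℝ) < (k:ℝ)/m ∧ (k:ℝ)/m < 1 := by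
    intro k h1 h2
    have hk0 : (0:ℝ) < k := by exact_mod_cast h1
    have hkm : k < m := by omega
    have hkm' : (k:ℝ) < m := by exact_mod_cast hkm
    exact ⟨by positivity, (div_lt_one hm0).2 hkm'⟩
  -- facts when a comes from K
  have hamem : K.Nonempty → 1 ≤ a ∧ a ≤ m - 1 ∧ τ a ≤ t := by
    intro h
    have := haK h
    rw [hKdef, Finset.mem_filter, Finset.mem_Icc] at this
    exact ⟨this.1.1, this.1.2, this.2⟩
  -- fact: if a+1 ≤ m-1 then t < τ (a+1)
  have hnext : a + 1 ≤ m - 1 → t < τ (a+1) := by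
    intro hc
    by_contra hle
    push_neg at hle
    have hmem : a + 1 ∈ K := by
      rw [hKdef, Finset.mem_filter, Finset.mem_Icc]
      exact ⟨⟨Nat.le_add_left 1 a, hc⟩, hle⟩
    have := hKle _ hmem
    omega
  have h2 : (a:ℝ)/m ≤ mF ρ t := by
    by_cases hK : K.Nonempty
    · obtain ⟨h1a, h2a, h3a⟩ := hamem hK
      obtain ⟨hp0, hp1⟩ := hp a h1a h2a
      exact le_trans (quant_upper ρ hp0 hp1) (mF_mono ρ h3a)
    · have ha0 : a = 0 := by rw [hadef, dif_neg hK]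
      rw [ha0]
      simpa using mF_nonneg ρ t
  have h4 : (a:ℝ)/m - δ ≤ E t := by
    by_cases hK : K.Nonempty
    · obtain ⟨h1a, h2a, h3a⟩ := hamem hK
      obtain ⟨hp0, hp1⟩ := hp a h1a h2a
      have hg := (hgrid a h1a h2a).1
      have : mF ρ (τ a) - δ ≤ E (τ a) := by
        have := abs_le.1 hg
        linarith [this.1]
      calc (a:ℝ)/m - δ ≤ mF ρ (τ a) - δ := by linarith [quant_upper ρ hp0 hp1]
        _ ≤ E (τ a) := this
        _ ≤ E t := hEm h3a
    · have ha0 : a = 0 := by rw [hadef, dif_neg hK]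
      rw [ha0]
      simpa using le_trans (by linarith : -δ ≤ (0:ℝ)) (hE0 t)
  have h1 : mF ρ t ≤ ((a:ℝ)+1)/m := by
    by_cases hc : a + 1 ≤ m - 1
    · have hlt := hnext hc
      obtain ⟨hp0, hp1⟩ := hp (a+1) (Nat.le_add_left 1 a) hc
      have := quant_lower ρ hp0 hp1
      have hcast : ((a:ℝ)+1) = ((a+1 : ℕ) : ℝ) := by push_cast; ring
      rw [hcast]
      exact le_trans (mF_le_mFlt ρ hlt) this
    · have hma : (m:ℝ) ≤ (a:ℝ)+1 := by
        have : m ≤ a + 1 := by omega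
        exact_mod_cast this
      calc mF ρ t ≤ 1 := mF_le_one ρ t
        _ = (m:ℝ)/m := by field_simp
        _ ≤ ((a:ℝ)+1)/m := div_le_div_of_nonneg_right hma hm0.le
  have h3 : E t ≤ ((a:ℝ)+1)/m + δ := by
    by_cases hc : a + 1 ≤ m - 1
    · have hlt := hnext hc
      obtain ⟨hp0, hp1⟩ := hp (a+1) (Nat.le_add_left 1 a) hc
      have hg := (hgrid (a+1) (Nat.le_add_left 1 a) hc).2
      have hql := quant_lower ρ hp0 hp1
      have hcast : ((a:ℝ)+1) = ((a+1 : ℕ) : ℝ) := by push_cast; ring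
      rw [hcast]
      have h5 := abs_le.1 hg
      calc E t ≤ Elt (τ (a+1)) := hEup hlt
        _ ≤ mFlt ρ (τ (a+1)) + δ := by linarith [h5.2]
        _ ≤ ((a+1:ℕ):ℝ)/m + δ := by linarith
    · have hma : (m:ℝ) ≤ (a:ℝ)+1 := by
        have : m ≤ a + 1 := by omega
        exact_mod_cast this
      have : E t ≤ ((a:ℝ)+1)/m := by
        calc E t ≤ 1 := hE1 t
          _ = (m:ℝ)/m := by field_simp
          _ ≤ ((a:ℝ)+1)/m := div_le_div_of_nonneg_right hma hm0.le
      linarith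
  have hsplit : ((a:ℝ)+1)/m = (a:ℝ)/m + 1/m := by ring
  rw [hsplit] at h1 h3
  rw [abs_le]
  constructor <;> linarith

end GridBound

open scoped Classical

section SLLN
variable {Ω : Type*} [MeasurableSpace Ω] {μ : Measure Ω} [IsProbabilityMeasure μ]

/-- SLLN for indicator functions of a measurable set. -/
lemma slln_indicator (W : ℕ → Ω → ℝ) (hWm : ∀ j, Measurable (W j))
    (hWi : iIndepFun W μ)
    (ρ : Measure ℝ) [IsProbabilityMeasure ρ] (hlaw : ∀ j, μ.map (W j) = ρ)
    {s : Set ℝ} (hs : MeasurableSet s) :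
    ∀ᵐ ω ∂μ, Tendsto (fun N => (∑ j ∈ Finset.range N,
        if W j ω ∈ s then (1:ℝ) else 0) / N) atTop (nhds (ρ s).toReal) := by
  set g : ℝ → ℝ := fun x => if x ∈ s then (1:ℝ) else 0 with hgdef
  have hgind : g = s.indicator (fun _ => (1:ℝ)) := by
    funext x
    rw [Set.indicator_apply]
  have hgm : Measurable g := by
    rw [hgind]; exact measurable_const.indicator hs
  set Y : ℕ → Ω → ℝ := fun j ω => g (W j ω) with hYdef
  have hYm : ∀ j, Measurable (Y j) := fun j => hgm.comp (hWm j)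
  have hint : Integrable (Y 0) μ := by
    refine (integrable_const (1:ℝ)).mono' (hYm 0).aestronglyMeasurable ?_
    refine Eventually.of_forall fun ω => ?_
    simp only [hYdef, hgdef, Real.norm_eq_abs]
    split <;> simp
  have hindep : Pairwise (Function.onFun (IndepFun · · μ) Y) := by
    intro i j hij
    exact (hWi.indepFun hij).comp hgm hgm
  have hident : ∀ j, IdentDistrib (Y j) (Y 0) μ μ := by
    intro j
    refine ⟨(hYm j).aemeasurable, (hYm 0).aemeasurable, ?_⟩
    have h1 : μ.map (fun ω => g (W j ω)) = (μ.map (W j)).map g := by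
      rw [Measure.map_map hgm (hWm j)]; rfl
    have h2 : μ.map (fun ω => g (W 0 ω)) = (μ.map (W 0)).map g := by
      rw [Measure.map_map hgm (hWm 0)]; rfl
    show μ.map (fun ω => g (W j ω)) = μ.map (fun ω => g (W 0 ω))
    rw [h1, h2, hlaw j, hlaw 0]
  have hexp : μ[Y 0] = (ρ s).toReal := by
    have h1 : ∫ ω, g (W 0 ω) ∂μ = ∫ x, g x ∂(μ.map (W 0)) :=
      (integral_map (hWm 0).aemeasurable hgm.aestronglyMeasurable).symm
    show ∫ ω, g (W 0 ω) ∂μ = (ρ s).toReal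
    rw [h1, hlaw 0, hgind, integral_indicator_const (1:ℝ) hs]
    simp
    rfl
  have h := strong_law_ae_real Y hint hindep hident
  rw [hexp] at h
  exact h

/-- Glivenko–Cantelli. -/
lemma glivenko_cantelli (W : ℕ → Ω → ℝ) (hWm : ∀ j, Measurable (W j))
    (hWi : iIndepFun W μ)
    (ρ : Measure ℝ) [IsProbabilityMeasure ρ] (hlaw : ∀ j, μ.map (W j) = ρ) :
    ∀ᵐ ω ∂μ, Tendsto (fun N => ⨆ t : ℝ, |eCDF (fun j => W j ω) N t - mF ρ t|)
      atTop (nhds 0) := by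
  have hae : ∀ᵐ ω ∂μ, ∀ p : ℕ × ℕ,
      Tendsto (fun N => eCDF (fun j => W j ω) N (quant ρ ((p.2:ℝ)/p.1)))
        atTop (nhds (mF ρ (quant ρ ((p.2:ℝ)/p.1)))) ∧
      Tendsto (fun N => eCDFlt (fun j => W j ω) N (quant ρ ((p.2:ℝ)/p.1)))
        atTop (nhds (mFlt ρ (quant ρ ((p.2:ℝ)/p.1)))) := by
    rw [ae_all_iff]
    intro p
    rw [eventually_and]
    constructor
    · have h := slln_indicator W hWm hWi ρ hlaw (measurableSet_Iic (a := quant ρ ((p.2:ℝ)/p.1)))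
      filter_upwards [h] with ω hω
      convert hω using 2 with N <;> rfl
    · have h := slln_indicator W hWm hWi ρ hlaw (measurableSet_Iio (a := quant ρ ((p.2:ℝ)/p.1)))
      filter_upwards [h] with ω hω
      convert hω using 2 with N <;> rfl
  filter_upwards [hae] with ω hω
  rw [NormedAddCommGroup.tendsto_nhds_zero]
  intro ε hε
  obtain ⟨m, hm⟩ := exists_nat_gt (2/ε)
  have hm1 : 1 ≤ m := by
    by_contra h
    push_neg at h
    interval_cases m
    simp at hm
    have := div_pos (by norm_num : (0:ℝ) < 2) hε
    linarith
  have hmpos : (0:ℝ) < m := by exact_mod_cast hm1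
  have h2m : 2/m < ε := by
    have h2 := (div_lt_iff₀ hε).1 hm
    rw [div_lt_iff₀ hmpos]
    linarith
  have hb : (0:ℝ) < 1/m := by positivity
  have hev : ∀ᶠ N in atTop, ∀ k ∈ Finset.Icc 1 (m-1),
      |eCDF (fun j => W j ω) N (quant ρ ((k:ℝ)/m)) - mF ρ (quant ρ ((k:ℝ)/m))| ≤ 1/m ∧
      |eCDFlt (fun j => W j ω) N (quant ρ ((k:ℝ)/m)) - mFlt ρ (quant ρ ((k:ℝ)/m))| ≤ 1/m := by
    rw [eventually_all_finset]
    intro k _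
    have h1 := (hω (m, k)).1
    have h2 := (hω (m, k)).2
    have h1' : Tendsto (fun N => eCDF (fun j => W j ω) N (quant ρ ((k:ℝ)/m))
        - mF ρ (quant ρ ((k:ℝ)/m))) atTop (nhds 0) := by
      simpa using h1.sub_const (mF ρ (quant ρ ((k:ℝ)/m)))
    have h2' : Tendsto (fun N => eCDFlt (fun j => W j ω) N (quant ρ ((k:ℝ)/m))
        - mFlt ρ (quant ρ ((k:ℝ)/m))) atTop (nhds 0) := by
      simpa using h2.sub_const (mFlt ρ (quant ρ ((k:ℝ)/m)))
    have e1 := NormedAddCommGroup.tendsto_nhds_zero.1 h1' (1/m) hb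
    have e2 := NormedAddCommGroup.tendsto_nhds_zero.1 h2' (1/m) hb
    filter_upwards [e1, e2] with N hN1 hN2
    rw [Real.norm_eq_abs] at hN1 hN2
    exact ⟨hN1.le, hN2.le⟩
  filter_upwards [hev] with N hN
  have hbound : ∀ t : ℝ, |eCDF (fun j => W j ω) N t - mF ρ t| ≤ 1/m + 1/m := by
    intro t
    refine grid_bound ρ (eCDF (fun j => W j ω) N) (eCDFlt (fun j => W j ω) N)
      (eCDF_nonneg _ N) (eCDF_le_one _ N) (eCDF_mono _ N)
      (fun hst => eCDF_le_eCDFlt _ N hst) (eCDFlt_le_eCDF _ N)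
      m hm1 (1/m) hb.le ?_ t
    intro k h1k h2k
    exact hN k (Finset.mem_Icc.2 ⟨h1k, h2k⟩)
  have hsup_le : (⨆ t : ℝ, |eCDF (fun j => W j ω) N t - mF ρ t|) ≤ 1/m + 1/m :=
    ciSup_le hbound
  have hsup_nonneg : 0 ≤ ⨆ t : ℝ, |eCDF (fun j => W j ω) N t - mF ρ t| := by
    have hbdd : BddAbove (Set.range fun t : ℝ => |eCDF (fun j => W j ω) N t - mF ρ t|) :=
      ⟨1/m + 1/m, by rintro x ⟨t, rfl⟩; exact hbound t⟩
    exact le_trans (abs_nonneg _) (le_ciSup hbdd 0)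
  rw [Real.norm_eq_abs, abs_of_nonneg hsup_nonneg]
  calc (⨆ t : ℝ, |eCDF (fun j => W j ω) N t - mF ρ t|) ≤ 1/m + 1/m := hsup_le
    _ = 2/m := by ring
    _ < ε := h2m


end SLLN

lemma abs_diff_le_two (w : ℕ → ℝ) (N : ℕ) (ν' : Measure ℝ) [IsProbabilityMeasure ν'] (t : ℝ) :
    |eCDF w N t - mF ν' t| ≤ 2 := by
  rw [abs_le]
  constructor <;>
    [linarith [eCDF_nonneg w N t, mF_le_one ν' t];
     linarith [eCDF_le_one w N t, mF_nonneg ν' t]]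

lemma bddAbove_rat (w : ℕ → ℝ) (N : ℕ) (ν' : Measure ℝ) [IsProbabilityMeasure ν'] :
    BddAbove (range fun r : ℚ => |eCDF w N (r:ℝ) - mF ν' (r:ℝ)|) :=
  ⟨2, by rintro x ⟨r, rfl⟩; exact abs_diff_le_two w N ν' r⟩

lemma bddAbove_real (w : ℕ → ℝ) (N : ℕ) (ν' : Measure ℝ) [IsProbabilityMeasure ν'] :
    BddAbove (range fun t : ℝ => |eCDF w N t - mF ν' t|) :=
  ⟨2, by rintro x ⟨t, rfl⟩; exact abs_diff_le_two w N ν' t⟩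

lemma sup_rat_le_sup_real (w : ℕ → ℝ) (N : ℕ) (ν' : Measure ℝ) [IsProbabilityMeasure ν'] :
    (⨆ r : ℚ, |eCDF w N (r:ℝ) - mF ν' (r:ℝ)|) ≤ ⨆ t : ℝ, |eCDF w N t - mF ν' t| :=
  ciSup_le fun r => le_ciSup (bddAbove_real w N ν') (r:ℝ)

lemma seqlim (t : ℝ) : Tendsto (fun k : ℕ => t + 1/(k+1)) atTop (nhds t) := by
  have h : Tendsto (fun k : ℕ => 1/((k:ℝ)+1)) atTop (nhds 0) :=
    tendsto_one_div_add_atTop_nhds_zero_nat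
  simpa using tendsto_const_nhds.add h

lemma sup_real_le_sup_rat (w : ℕ → ℝ) (N : ℕ) (ν' : Measure ℝ) [IsProbabilityMeasure ν'] :
    (⨆ t : ℝ, |eCDF w N t - mF ν' t|) ≤ ⨆ r : ℚ, |eCDF w N (r:ℝ) - mF ν' (r:ℝ)| := by
  apply ciSup_le
  intro t
  have hlt : ∀ k : ℕ, t < t + 1/((k:ℕ)+1 : ℝ) := by
    intro k; have : (0:ℝ) < 1/((k:ℝ)+1) := by positivity
    linarith
  have hr : ∀ k : ℕ, ∃ r : ℚ, t < (r:ℝ) ∧ (r:ℝ) < t + 1/((k:ℝ)+1) :=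
    fun k => exists_rat_btwn (hlt k)
  choose r hr1 hr2 using hr
  -- F converges along the rationals
  have hFup : Tendsto (fun k : ℕ => mF ν' (t + 1/((k:ℝ)+1))) atTop (nhds (mF ν' t)) := by
    have hc : ContinuousWithinAt (cdf ν') (Ici t) t := (cdf ν').right_continuous t
    have hseq : Tendsto (fun k : ℕ => t + 1/((k:ℝ)+1)) (atTop) (nhdsWithin t (Ici t)) := by
      rw [tendsto_nhdsWithin_iff]
      exact ⟨seqlim t, Eventually.of_forall fun k => (hlt k).le⟩
    have h2 := hc.tendsto.comp hseq
    have h3 : (fun k : ℕ => mF ν' (t + 1/((k:ℝ)+1)))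
        = fun k : ℕ => cdf ν' (t + 1/((k:ℝ)+1)) := by
      funext k; rw [mF_eq_cdf]
    rw [h3, mF_eq_cdf]
    exact h2
  have hF : Tendsto (fun k : ℕ => mF ν' ((r k : ℝ))) atTop (nhds (mF ν' t)) := by
    apply tendsto_of_tendsto_of_tendsto_of_le_of_le tendsto_const_nhds hFup
    · exact fun k => mF_mono ν' (hr1 k).le
    · exact fun k => mF_mono ν' (hr2 k).le
  -- E is eventually constant along the rationals
  have hE : ∀ᶠ k in atTop, eCDF w N ((r k : ℝ)) = eCDF w N t := by
    have hj : ∀ j ∈ Finset.range N, ∀ᶠ k in atTop,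
        (if w j ≤ (r k : ℝ) then (1:ℝ) else 0) = (if w j ≤ t then (1:ℝ) else 0) := by
      intro j _
      by_cases hwj : w j ≤ t
      · refine Eventually.of_forall fun k => ?_
        rw [if_pos (hwj.trans (hr1 k).le), if_pos hwj]
      · have hlt' : t < w j := not_le.1 hwj
        have := (seqlim t).eventually_lt_const hlt'
        filter_upwards [this] with k hk
        have : ¬ (w j ≤ (r k : ℝ)) := not_le.2 ((hr2 k).trans hk)
        rw [if_neg this, if_neg hwj]
    have := (eventually_all_finset (Finset.range N)).2 hj
    filter_upwards [this] with k hk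
    unfold eCDF
    congr 1
    exact Finset.sum_congr rfl hk
  have hEconst : Tendsto (fun k : ℕ => eCDF w N ((r k : ℝ))) atTop (nhds (eCDF w N t)) :=
    Tendsto.congr' (hE.mono fun k hk => hk.symm) tendsto_const_nhds
  have hD : Tendsto (fun k : ℕ => |eCDF w N ((r k : ℝ)) - mF ν' ((r k : ℝ))|) atTop
      (nhds |eCDF w N t - mF ν' t|) := (hEconst.sub hF).abs
  exact le_of_tendsto hD (Eventually.of_forall fun k => le_ciSup (bddAbove_rat w N ν') (r k))

lemma measurable_inner_right {n : ℕ} (qt : EuclideanSpace ℝ (Fin n)) :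
    Measurable (fun y : EuclideanSpace ℝ (Fin n) => (inner ℝ qt y : ℝ)) :=
  (continuous_const.inner continuous_id).measurable

lemma isCDF_measProjCDF {n : ℕ} (ν : Measure (EuclideanSpace ℝ (Fin n)))
    [IsProbabilityMeasure ν] (qt : EuclideanSpace ℝ (Fin n)) :
    IsCDF (measProjCDF ν qt) := by
  refine ⟨ν.map (fun y => (inner ℝ qt y : ℝ)),
    Measure.isProbabilityMeasure_map (measurable_inner_right qt).aemeasurable, fun t => ?_⟩
  rw [Measure.map_apply (measurable_inner_right qt) measurableSet_Iic]
  rfl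

lemma measProjCDF_eq_map {n : ℕ} (ν : Measure (EuclideanSpace ℝ (Fin n)))
    (qt : EuclideanSpace ℝ (Fin n)) (t : ℝ) :
    measProjCDF ν qt t = ((ν.map (fun y => (inner ℝ qt y : ℝ))) (Iic t)).toReal := by
  rw [Measure.map_apply (measurable_inner_right qt) measurableSet_Iic]
  rfl

lemma isCDF_eCDF (w : ℕ → ℝ) {N : ℕ} (hN : 1 ≤ N) : IsCDF (eCDF w N) := by
  have hN0 : (N : ENNReal) ≠ 0 := by simp; omega
  have hNt : (N : ENNReal) ≠ ⊤ := ENNReal.natCast_ne_top N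
  refine ⟨(N : ENNReal)⁻¹ • ∑ j ∈ Finset.range N, Measure.dirac (w j), ⟨?_⟩, fun t => ?_⟩
  · rw [Measure.smul_apply, Measure.finset_sum_apply]
    simp only [measure_univ, Finset.sum_const, Finset.card_range, nsmul_eq_mul, mul_one]
    rw [smul_eq_mul, ENNReal.inv_mul_cancel hN0 hNt]
  · rw [Measure.smul_apply, Measure.finset_sum_apply]
    have hdirac : ∀ j, Measure.dirac (w j) (Iic t) =
        (if w j ≤ t then (1 : ENNReal) else 0) := by
      intro j
      rw [Measure.dirac_apply' _ measurableSet_Iic]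
      simp only [indicator, mem_Iic, Pi.one_apply]
    simp only [hdirac]
    rw [smul_eq_mul, ENNReal.toReal_mul]
    have h1 : ((N : ENNReal)⁻¹).toReal = 1 / (N : ℝ) := by
      rw [ENNReal.toReal_inv]
      simp
    have h2 : (∑ j ∈ Finset.range N, if w j ≤ t then (1 : ENNReal) else 0).toReal
        = ∑ j ∈ Finset.range N, if w j ≤ t then (1:ℝ) else 0 := by
      rw [ENNReal.toReal_sum]
      · apply Finset.sum_congr rfl
        intro j _
        split <;> simp
      · intro j _
        split <;> simp
    rw [h1, h2, eCDF]
    ring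

/-- Reindexing an independent family along an injective map. -/
lemma iIndepFun_reindex {ι ι' Ω β : Type*} [MeasurableSpace Ω] [mβ : MeasurableSpace β]
    {μ : Measure Ω} {f : ι → Ω → β} (g : ι' → ι) (hg : Function.Injective g)
    (h : iIndepFun f μ) : iIndepFun (fun k => f (g k)) μ := by
  classical
  rw [iIndepFun_iff_measure_inter_preimage_eq_mul] at h ⊢
  intro S sets hsets
  set e : ι' ↪ ι := ⟨g, hg⟩ with he
  set sets' : ι → Set β := fun i =>
    if hex : ∃ k, k ∈ S ∧ g k = i then sets hex.choose else univ with hsets'def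
  have hkey : ∀ k ∈ S, sets' (g k) = sets k := by
    intro k hk
    have hex : ∃ k', k' ∈ S ∧ g k' = g k := ⟨k, hk, rfl⟩
    rw [hsets'def]
    simp only []
    rw [dif_pos hex]
    exact congrArg sets (hg hex.choose_spec.2)
  have hmeas' : ∀ i ∈ S.map e, MeasurableSet (sets' i) := by
    intro i hi
    rw [Finset.mem_map] at hi
    obtain ⟨k, hk, rfl⟩ := hi
    rw [show e k = g k from rfl, hkey k hk]
    exact hsets k hk
  have h0 := h (S.map e) hmeas'
  have hInter : (⋂ i ∈ S.map e, f i ⁻¹' sets' i) = ⋂ k ∈ S, f (g k) ⁻¹' sets k := by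
    ext x
    simp only [mem_iInter, Finset.mem_map]
    constructor
    · intro hx k hk
      have := hx (g k) ⟨k, hk, rfl⟩
      rwa [hkey k hk] at this
    · rintro hx i ⟨k, hk, rfl⟩
      rw [show e k = g k from rfl, hkey k hk]
      exact hx k hk
  have hProd : (∏ i ∈ S.map e, μ (f i ⁻¹' sets' i)) = ∏ k ∈ S, μ (f (g k) ⁻¹' sets k) := by
    rw [Finset.prod_map]
    apply Finset.prod_congr rfl
    intro k hk
    rw [show e k = g k from rfl, hkey k hk]
  rw [hInter, hProd] at h0
  exact h0

variable {n : ℕ} {Ω : Type*} [MeasurableSpace Ω] {μ : Measure Ω} [IsProbabilityMeasure μ]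
  {H : ℕ}

/-- The random direction is independent of the joint sample sequence. -/
lemma indep_q_tuple
    (q : Fin H → Ω → EuclideanSpace ℝ (Fin n))
    (X : Fin H → ℕ → Ω → EuclideanSpace ℝ (Fin n))
    (hq_meas : ∀ i, Measurable (q i)) (hX_meas : ∀ i j, Measurable (X i j))
    (hindep : iIndepFun
      (Sum.elim (fun i => q i) (fun p : Fin H × ℕ => X p.1 p.2)) μ)
    (i : Fin H) :
    IndepFun (q i) (fun ω (j : ℕ) => X i j ω) μ := by
  set F := Sum.elim (fun i => q i) (fun p : Fin H × ℕ => X p.1 p.2) with hF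
  have hFmeas : ∀ a, Measurable (F a) := by
    rintro (a | p)
    · exact hq_meas a
    · exact hX_meas p.1 p.2
  have h_le : ∀ a, MeasurableSpace.comap (F a)
      (inferInstance : MeasurableSpace (EuclideanSpace ℝ (Fin n))) ≤ _ :=
    fun a => (hFmeas a).comap_le
  have hind := indep_biSup_compl h_le hindep.iIndep {Sum.inl i}
  rw [IndepFun_iff_Indep]
  refine indep_of_indep_of_le_left (indep_of_indep_of_le_right hind ?_) ?_
  · -- comap of the tuple is below the sup over the complement
    have hpi : (inferInstance : MeasurableSpace (ℕ → EuclideanSpace ℝ (Fin n)))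
        = ⨆ j : ℕ, MeasurableSpace.comap (fun x : ℕ → EuclideanSpace ℝ (Fin n) => x j)
            inferInstance := rfl
    calc MeasurableSpace.comap (fun ω (j : ℕ) => X i j ω) inferInstance
        = ⨆ j : ℕ, (MeasurableSpace.comap (fun x : ℕ → EuclideanSpace ℝ (Fin n) => x j)
            inferInstance).comap (fun ω (j : ℕ) => X i j ω) := by
          rw [hpi, MeasurableSpace.comap_iSup]
      _ = ⨆ j : ℕ, MeasurableSpace.comap (fun ω => X i j ω) inferInstance := by
          congr 1
          funext j
          rw [MeasurableSpace.comap_comp]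
          rfl
      _ ≤ _ := by
          apply iSup_le
          intro j
          have hmem : (Sum.inr (i, j) : Fin H ⊕ (Fin H × ℕ)) ∈ ({Sum.inl i} : Set _)ᶜ := by
            simp
          have heq2 : MeasurableSpace.comap (fun ω => X i j ω)
              (inferInstance : MeasurableSpace (EuclideanSpace ℝ (Fin n)))
              = MeasurableSpace.comap (F (Sum.inr (i, j))) inferInstance := rfl
          rw [heq2]
          exact le_iSup₂ (f := fun a (_ : a ∈ ({Sum.inl i} : Set (Fin H ⊕ (Fin H × ℕ)))ᶜ) =>
            MeasurableSpace.comap (F a) inferInstance) (Sum.inr (i, j)) hmem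
  · -- comap of q i is below the sup over the singleton
    have heq : MeasurableSpace.comap (q i)
        (inferInstance : MeasurableSpace (EuclideanSpace ℝ (Fin n)))
        = MeasurableSpace.comap (F (Sum.inl i)) inferInstance := rfl
    rw [heq]
    exact le_iSup₂ (f := fun a (_ : a ∈ ({Sum.inl i} : Set (Fin H ⊕ (Fin H × ℕ)))) =>
      MeasurableSpace.comap (F a) inferInstance) (Sum.inl i) rfl

/-- Rational-sup distance between empirical CDF and projected CDF, as a function on
direction × sample sequence. -/
noncomputable def DQ {n : ℕ} (νX : Measure (EuclideanSpace ℝ (Fin n))) (N : ℕ)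
    (z : EuclideanSpace ℝ (Fin n) × (ℕ → EuclideanSpace ℝ (Fin n))) : ℝ :=
  ⨆ r : ℚ, |eCDF (fun j => (inner ℝ z.1 (z.2 j) : ℝ)) N (r:ℝ) - measProjCDF νX z.1 (r:ℝ)|

lemma measurable_DQ (νX : Measure (EuclideanSpace ℝ (Fin n))) [IsProbabilityMeasure νX] (N : ℕ) :
    Measurable (DQ νX N) := by
  apply Measurable.iSup
  intro r
  apply Measurable.abs
  apply Measurable.sub
  · unfold eCDF
    apply Measurable.div_const
    apply Finset.measurable_sum
    intro j _
    have hinner : Measurable fun z : EuclideanSpace ℝ (Fin n) × (ℕ → EuclideanSpace ℝ (Fin n)) =>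
        (inner ℝ z.1 (z.2 j) : ℝ) := by
      have hcont : Continuous fun p : EuclideanSpace ℝ (Fin n) × EuclideanSpace ℝ (Fin n) =>
          (inner ℝ p.1 p.2 : ℝ) := continuous_inner
      exact hcont.measurable.comp (measurable_fst.prodMk ((measurable_pi_apply j).comp
        measurable_snd))
    exact Measurable.ite (measurableSet_le hinner measurable_const) measurable_const
      measurable_const
  · have hset : MeasurableSet {p : EuclideanSpace ℝ (Fin n) × EuclideanSpace ℝ (Fin n) |
        (inner ℝ p.1 p.2 : ℝ) ≤ (r:ℝ)} :=
      measurableSet_le (continuous_inner.measurable) measurable_const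
    have hm : Measurable fun qt : EuclideanSpace ℝ (Fin n) =>
        νX {y | (inner ℝ qt y : ℝ) ≤ (r:ℝ)} := by
      have := measurable_measure_prodMk_left (ν := νX) hset
      exact this
    exact (hm.ennreal_toReal).comp measurable_fst

/-- Key pointwise a.e. statement: Glivenko–Cantelli along the random direction. -/
lemma ae_GC_rand
    (q : Fin H → Ω → EuclideanSpace ℝ (Fin n))
    (X : Fin H → ℕ → Ω → EuclideanSpace ℝ (Fin n))
    (hq_meas : ∀ i, Measurable (q i)) (hX_meas : ∀ i j, Measurable (X i j))
    (νq νX : Measure (EuclideanSpace ℝ (Fin n)))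
    [IsProbabilityMeasure νq] [IsProbabilityMeasure νX]
    (hq_law : ∀ i, μ.map (q i) = νq) (hX_law : ∀ i j, μ.map (X i j) = νX)
    (hindep : iIndepFun
      (Sum.elim (fun i => q i) (fun p : Fin H × ℕ => X p.1 p.2)) μ)
    (i : Fin H) :
    ∀ᵐ ω ∂μ, Tendsto (fun N => ⨆ t : ℝ,
      |eCDF (fun j => (inner ℝ (q i ω) (X i j ω) : ℝ)) N t - measProjCDF νX (q i ω) t|)
      atTop (nhds 0) := by
  classical
  set T2 : Ω → (ℕ → EuclideanSpace ℝ (Fin n)) := fun ω j => X i j ω with hT2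
  have hT2m : Measurable T2 := measurable_pi_lambda _ (fun j => hX_meas i j)
  set A : Set (EuclideanSpace ℝ (Fin n) × (ℕ → EuclideanSpace ℝ (Fin n))) :=
    {z | Tendsto (fun N => DQ νX N z) atTop (nhds 0)} with hA
  have hAmeas : MeasurableSet A :=
    measurableSet_tendsto (nhds 0) (fun N => measurable_DQ νX N)
  -- subfamily independence
  have hXindep : iIndepFun (fun j : ℕ => X i j) μ := by
    have := iIndepFun_reindex (fun j : ℕ => (Sum.inr (i, j) : Fin H ⊕ (Fin H × ℕ)))
      (fun a b hab => by simpa using hab) hindep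
    exact this
  -- slicewise a.e. membership
  have hslice : ∀ qt : EuclideanSpace ℝ (Fin n), ∀ᵐ ω ∂μ, (qt, T2 ω) ∈ A := by
    intro qt
    set ρqt : Measure ℝ := νX.map (fun y => (inner ℝ qt y : ℝ)) with hρ
    haveI : IsProbabilityMeasure ρqt :=
      Measure.isProbabilityMeasure_map (measurable_inner_right qt).aemeasurable
    set W : ℕ → Ω → ℝ := fun j ω => (inner ℝ qt (X i j ω) : ℝ) with hW
    have hWm : ∀ j, Measurable (W j) := fun j => (measurable_inner_right qt).comp (hX_meas i j)
    have hWindep : iIndepFun W μ :=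
      hXindep.comp (fun _ => fun y => (inner ℝ qt y : ℝ)) (fun _ => measurable_inner_right qt)
    have hWlaw : ∀ j, μ.map (W j) = ρqt := by
      intro j
      rw [hρ, ← hX_law i j, hW]
      exact (Measure.map_map (measurable_inner_right qt) (hX_meas i j)).symm
    have hGC := glivenko_cantelli W hWm hWindep ρqt hWlaw
    filter_upwards [hGC] with ω hω
    rw [hA, mem_setOf_eq]
    have hmFeq : ∀ s : ℝ, measProjCDF νX qt s = mF ρqt s := fun s => measProjCDF_eq_map νX qt s
    have hDQ : ∀ N, DQ νX N (qt, T2 ω)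
        = ⨆ r : ℚ, |eCDF (fun j => W j ω) N (r:ℝ) - mF ρqt (r:ℝ)| := by
      intro N
      unfold DQ
      congr 1
      funext r
      rw [hmFeq]
    have h0le : ∀ N, 0 ≤ DQ νX N (qt, T2 ω) := by
      intro N
      rw [hDQ N]
      exact le_trans (abs_nonneg _) (le_ciSup (bddAbove_rat (fun j => W j ω) N ρqt) (0:ℚ))
    have hle : ∀ N, DQ νX N (qt, T2 ω)
        ≤ ⨆ t : ℝ, |eCDF (fun j => W j ω) N t - mF ρqt t| := by
      intro N
      rw [hDQ N]
      exact sup_rat_le_sup_real (fun j => W j ω) N ρqt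
    exact squeeze_zero h0le hle hω
  -- independence of q i and the tuple, product law
  have hpairind : IndepFun (q i) T2 μ := indep_q_tuple q X hq_meas hX_meas hindep i
  have hpairlaw : μ.map (fun ω => (q i ω, T2 ω)) = νq.prod (μ.map T2) := by
    rw [← hq_law i]
    exact (indepFun_iff_map_prod_eq_prod_map_map (hq_meas i).aemeasurable
      hT2m.aemeasurable).1 hpairind
  -- a.e. membership under the product measure
  have hprodae : ∀ᵐ z ∂(νq.prod (μ.map T2)), z ∈ A := by
    rw [ae_iff]
    have hcompl : {z : EuclideanSpace ℝ (Fin n) × (ℕ → EuclideanSpace ℝ (Fin n)) | ¬ z ∈ A}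
        = Aᶜ := rfl
    rw [hcompl, Measure.measure_prod_null hAmeas.compl]
    refine Eventually.of_forall fun qt => ?_
    show (μ.map T2) (Prod.mk qt ⁻¹' Aᶜ) = 0
    rw [Measure.map_apply hT2m (measurable_prodMk_left hAmeas.compl)]
    have h2 := hslice qt
    rw [ae_iff] at h2
    exact h2
  -- transfer back to Ω
  have hmain : ∀ᵐ ω ∂μ, (q i ω, T2 ω) ∈ A := by
    have hpm : Measurable (fun ω => (q i ω, T2 ω)) := (hq_meas i).prodMk hT2m
    have := (ae_map_iff hpm.aemeasurable hAmeas).1 (by rw [hpairlaw]; exact hprodae)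
    exact this
  filter_upwards [hmain] with ω hω
  set ρω : Measure ℝ := νX.map (fun y => (inner ℝ (q i ω) y : ℝ)) with hρω
  haveI : IsProbabilityMeasure ρω :=
    Measure.isProbabilityMeasure_map (measurable_inner_right (q i ω)).aemeasurable
  have hmFeq : ∀ s : ℝ, measProjCDF νX (q i ω) s = mF ρω s :=
    fun s => measProjCDF_eq_map νX (q i ω) s
  have hgoal_eq : (fun N => ⨆ t : ℝ,
      |eCDF (fun j => (inner ℝ (q i ω) (X i j ω) : ℝ)) N t - measProjCDF νX (q i ω) t|)
      = fun N => ⨆ t : ℝ, |eCDF (fun j => (inner ℝ (q i ω) (X i j ω) : ℝ)) N t - mF ρω t| := by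
    funext N
    congr 1
    funext t
    rw [hmFeq]
  rw [hgoal_eq]
  have hωA : Tendsto (fun N => DQ νX N (q i ω, T2 ω)) atTop (nhds 0) := hω
  have hDQ : ∀ N, DQ νX N (q i ω, T2 ω)
      = ⨆ r : ℚ, |eCDF (fun j => (inner ℝ (q i ω) (X i j ω) : ℝ)) N (r:ℝ) - mF ρω (r:ℝ)| := by
    intro N
    unfold DQ
    congr 1
    funext r
    rw [hmFeq]
  refine squeeze_zero (fun N => ?_) (fun N => ?_) hωA
  · exact le_trans (abs_nonneg _)
      (le_ciSup (bddAbove_real (fun j => (inner ℝ (q i ω) (X i j ω) : ℝ)) N ρω) (0:ℝ))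
  · rw [hDQ N]
    exact sup_real_le_sup_rat (fun j => (inner ℝ (q i ω) (X i j ω) : ℝ)) N ρω


end SWGC

/-- **Asymptotic unbiasedness of the estimator `Δ̂(X,Y)`**: with `(q_i)_{i=1}^H` i.i.d.
copies of the direction `q` (with law `νq` on the unit sphere), `(X_{i,j})` i.i.d. copies
of `X` (with law `νX`), all mutually independent, and `d(·,g)` continuous with respect to
the sup-norm in its first argument and bounded above uniformly by `M` for all CDFs `g`,
the expectation of `Δ̂(X,Y) = (1/H) ∑_{i=1}^H d(F̂_X^{q_i,N}, F_Y^{q_i})` converges to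
`Δ(X,Y) = E_q[d(F_X^q, F_Y^q)]` as `N → ∞`. -/
theorem estimator_asymptotically_unbiased {n : ℕ}
    {Ω : Type*} [MeasurableSpace Ω] (μ : Measure Ω) [IsProbabilityMeasure μ]
    (H : ℕ) (hH : 0 < H)
    (q : Fin H → Ω → EuclideanSpace ℝ (Fin n))
    (X : Fin H → ℕ → Ω → EuclideanSpace ℝ (Fin n))
    (hq_meas : ∀ i, Measurable (q i)) (hX_meas : ∀ i j, Measurable (X i j))
    (νq νX νY : Measure (EuclideanSpace ℝ (Fin n)))
    [IsProbabilityMeasure νq] [IsProbabilityMeasure νX] [IsProbabilityMeasure νY]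
    (hq_law : ∀ i, μ.map (q i) = νq) (hX_law : ∀ i j, μ.map (X i j) = νX)
    (hq_sphere : ∀ i ω, q i ω ∈ Metric.sphere (0 : EuclideanSpace ℝ (Fin n)) 1)
    (hindep : iIndepFun
      (Sum.elim (fun i => q i) (fun p : Fin H × ℕ => X p.1 p.2)) μ)
    (d : (ℝ → ℝ) → (ℝ → ℝ) → ℝ) (M : ℝ)
    (hd_cont : ∀ (g f : ℝ → ℝ) (fs : ℕ → ℝ → ℝ), IsCDF g → IsCDF f → (∀ k, IsCDF (fs k)) →
      Tendsto (fun k => ⨆ x, |fs k x - f x|) atTop (nhds 0) →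
      Tendsto (fun k => d (fs k) g) atTop (nhds (d f g)))
    (hd_nonneg : ∀ f g : ℝ → ℝ, IsCDF f → IsCDF g → 0 ≤ d f g)
    (hd_bdd : ∀ f g : ℝ → ℝ, IsCDF f → IsCDF g → d f g ≤ M)
    (hmeas_est : ∀ (N : ℕ) (i : Fin H), AEStronglyMeasurable
      (fun ω => d (empProjCDF (q i) (X i) N ω) (measProjCDF νY (q i ω))) μ)
    (hmeas_lim : AEStronglyMeasurable
      (fun qt => d (measProjCDF νX qt) (measProjCDF νY qt)) νq) :
    Tendsto
      (fun N => ∫ ω, (1 / (H : ℝ)) *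
        ∑ i, d (empProjCDF (q i) (X i) N ω) (measProjCDF νY (q i ω)) ∂μ)
      atTop (nhds (∫ qt, d (measProjCDF νX qt) (measProjCDF νY qt) ∂νq)) := by
  classical
  have hcdf0 : IsCDF (measProjCDF νX 0) := SWGC.isCDF_measProjCDF νX 0
  have hM0 : 0 ≤ M := le_trans (hd_nonneg _ _ hcdf0 hcdf0) (hd_bdd _ _ hcdf0 hcdf0)
  have hbound : ∀ (N : ℕ) (i : Fin H), 1 ≤ N → ∀ ω,
      ‖d (empProjCDF (q i) (X i) N ω) (measProjCDF νY (q i ω))‖ ≤ M := by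
    intro N i hN ω
    have h1 : IsCDF (empProjCDF (q i) (X i) N ω) := by
      have h := SWGC.isCDF_eCDF (fun j => (inner ℝ (q i ω) (X i j ω) : ℝ)) hN
      exact h
    have h2 : IsCDF (measProjCDF νY (q i ω)) := SWGC.isCDF_measProjCDF νY (q i ω)
    rw [Real.norm_eq_abs, abs_of_nonneg (hd_nonneg _ _ h1 h2)]
    exact hd_bdd _ _ h1 h2
  have hInt : ∀ (N : ℕ) (i : Fin H), 1 ≤ N → Integrable
      (fun ω => d (empProjCDF (q i) (X i) N ω) (measProjCDF νY (q i ω))) μ :=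
    fun N i hN => (integrable_const M).mono' (hmeas_est N i)
      (Eventually.of_forall (hbound N i hN))
  set L := ∫ qt, d (measProjCDF νX qt) (measProjCDF νY qt) ∂νq with hLdef
  have hkey : ∀ i : Fin H, Tendsto (fun N => ∫ ω,
      d (empProjCDF (q i) (X i) N ω) (measProjCDF νY (q i ω)) ∂μ) atTop (nhds L) := by
    intro i
    have h1 : AEStronglyMeasurable
        (fun qt => d (measProjCDF νX qt) (measProjCDF νY qt)) (μ.map (q i)) := by
      rw [hq_law i]; exact hmeas_lim
    have hLeq : L = ∫ ω, d (measProjCDF νX (q i ω)) (measProjCDF νY (q i ω)) ∂μ := by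
      rw [hLdef, ← hq_law i, integral_map (hq_meas i).aemeasurable h1]
    rw [hLeq, ← tendsto_add_atTop_iff_nat 1]
    have hae := SWGC.ae_GC_rand q X hq_meas hX_meas νq νX hq_law hX_law hindep i
    apply tendsto_integral_of_dominated_convergence (fun _ => M)
      (fun N => hmeas_est (N+1) i) (integrable_const M)
      (fun N => Eventually.of_forall (hbound (N+1) i (by omega)))
    filter_upwards [hae] with ω hω
    refine hd_cont (measProjCDF νY (q i ω)) (measProjCDF νX (q i ω))
      (fun k => empProjCDF (q i) (X i) (k+1) ω)
      (SWGC.isCDF_measProjCDF νY _) (SWGC.isCDF_measProjCDF νX _)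
      (fun k => ?_) ?_
    · have h := SWGC.isCDF_eCDF (fun j => (inner ℝ (q i ω) (X i j ω) : ℝ))
        (N := k+1) (by omega)
      exact h
    · have h := hω.comp (tendsto_add_atTop_nat 1)
      exact h
  have hfin : Tendsto (fun N => (1/(H:ℝ)) * ∑ i, ∫ ω,
      d (empProjCDF (q i) (X i) N ω) (measProjCDF νY (q i ω)) ∂μ) atTop
      (nhds ((1/(H:ℝ)) * ∑ _i : Fin H, L)) :=
    (tendsto_finset_sum Finset.univ (fun i _ => hkey i)).const_mul _
  have hLsum : (1/(H:ℝ)) * ∑ _i : Fin H, L = L := by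
    rw [Finset.sum_const, Finset.card_univ, Fintype.card_fin, nsmul_eq_mul]
    have hHne : (H:ℝ) ≠ 0 := by exact_mod_cast hH.ne'
    field_simp
  rw [hLsum] at hfin
  refine hfin.congr' ?_
  filter_upwards [eventually_ge_atTop 1] with N hN
  rw [MeasureTheory.integral_const_mul,
    integral_finset_sum Finset.univ (fun i _ => hInt N i hN)]
end

section
/- Asymptotic variance of the estimator: suppose d(·,g) is continuous with respect to the sup-norm in its first argument and bounded above uniformly by a constant M for all CDFs g. Then Var[Δ̂(X,Y)] → (1/H)·Var_q[d(F_X^q, F_Y^q)] as N → ∞. -/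
open MeasureTheory ProbabilityTheory Filter

open Topology
open scoped ENNReal

section Helpers
section Det

/-- Deterministic grid lemma for Glivenko-Cantelli. -/
lemma gc_det {F G Gm : ℝ → ℝ} {ε : ℝ} {m : ℕ} {x : ℕ → ℝ}
    (hε : 0 < ε)
    (hFmono : Monotone F) (hF0 : ∀ t, 0 ≤ F t) (hF1 : ∀ t, F t ≤ 1)
    (hG0 : ∀ t, 0 ≤ G t) (hG1 : ∀ t, G t ≤ 1) (hGmono : Monotone G)
    (hGGm : ∀ s t : ℝ, s < t → G s ≤ Gm t)
    (h1 : (1:ℝ) ≤ (m+1) * ε)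
    (hxlow : ∀ k, 1 ≤ k → k ≤ m → (k:ℝ) * ε ≤ F (x k))
    (hxinf : ∀ k, 1 ≤ k → k ≤ m → ∀ t, (k:ℝ) * ε ≤ F t → x k ≤ t)
    (hGx : ∀ k, 1 ≤ k → k ≤ m → |G (x k) - F (x k)| ≤ ε)
    (hGmx : ∀ k, 1 ≤ k → k ≤ m → Gm (x k) ≤ (k:ℝ) * ε + ε) :
    ∀ t, |G t - F t| ≤ 2 * ε := by
  intro t
  set k : ℕ := min m ⌊F t / ε⌋₊ with hk
  have hkm : k ≤ m := min_le_left _ _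
  have hkle : (k:ℝ) * ε ≤ F t := by
    have h1 : (k:ℝ) ≤ ⌊F t / ε⌋₊ := by exact_mod_cast min_le_right m _
    have h2 : (⌊F t / ε⌋₊ : ℝ) ≤ F t / ε := Nat.floor_le (div_nonneg (hF0 t) hε.le)
    calc (k:ℝ) * ε ≤ (F t / ε) * ε := by nlinarith
    _ = F t := by field_simp
  have hup : F t ≤ ((k:ℝ) + 1) * ε := by
    rcases lt_or_ge k m with hlt | hge
    · have hkf : k = ⌊F t / ε⌋₊ := by
        rcases min_cases m ⌊F t / ε⌋₊ with ⟨h, h'⟩ | ⟨h, h'⟩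
        · omega
        · exact h
      have := Nat.lt_floor_add_one (F t / ε)
      rw [← hkf] at this
      have : F t / ε < (k:ℝ) + 1 := by exact_mod_cast this
      calc F t = (F t / ε) * ε := by field_simp
      _ ≤ ((k:ℝ) + 1) * ε := by nlinarith
    · have hkm' : k = m := le_antisymm hkm hge
      calc F t ≤ 1 := hF1 t
      _ ≤ ((m:ℝ) + 1) * ε := by exact_mod_cast h1
      _ = ((k:ℝ) + 1) * ε := by rw [hkm']
  -- upper bound on G t
  have hGup : G t - F t ≤ 2 * ε := by
    rcases lt_or_ge k m with hlt | hge
    · -- t < x (k+1)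
      have hk1 : 1 ≤ k + 1 := le_add_self
      have hk1m : k + 1 ≤ m := hlt
      have hxk1 : t < x (k+1) := by
        by_contra hc
        push_neg at hc
        have := hFmono hc
        have h2 := hxlow (k+1) hk1 hk1m
        have : ((k:ℝ)+1) * ε ≤ F t := by
          push_cast at h2 ⊢
          linarith
        -- F t ≤ (k+1)ε and ≥, so F t = (k+1)ε; then x(k+1) ≤ t fine, but need strict...
        -- use hxinf : x (k+1) ≤ t is consistent; contradiction needed differently
        have hfl : (k:ℕ) + 1 ≤ ⌊F t / ε⌋₊ := by
          apply Nat.le_floor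
          rw [le_div_iff₀ hε]
          push_cast
          linarith
        have hkf : k = ⌊F t / ε⌋₊ := by
          rcases min_cases m ⌊F t / ε⌋₊ with ⟨h, h'⟩ | ⟨h, h'⟩
          · omega
          · exact h
        omega
      calc G t - F t ≤ Gm (x (k+1)) - F t := by linarith [hGGm t (x (k+1)) hxk1]
      _ ≤ ((k:ℝ)+1) * ε + ε - F t := by
        have := hGmx (k+1) hk1 hk1m
        push_cast at this
        linarith
      _ ≤ ((k:ℝ)+1) * ε + ε - (k:ℝ) * ε := by linarith
      _ = 2 * ε := by ring
    · have hkm' : k = m := le_antisymm hkm hge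
      have : F t ≥ (m:ℝ) * ε := by rw [hkm'] at hkle; exact_mod_cast hkle
      have hG1t := hG1 t
      push_cast at h1
      linarith
  -- lower bound on G t
  have hGlow : F t - G t ≤ 2 * ε := by
    rcases Nat.eq_zero_or_pos k with hk0 | hkpos
    · have : F t ≤ ε := by
        rw [hk0] at hup; push_cast at hup; linarith
      linarith [hG0 t]
    · have hxk : x k ≤ t := hxinf k hkpos hkm t hkle
      have h2 : G (x k) ≤ G t := hGmono hxk
      have h3 := hGx k hkpos hkm
      have h4 := hxlow k hkpos hkm
      have h5 : F (x k) - ε ≤ G (x k) := by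
        rw [abs_le] at h3; linarith
      linarith
  rw [abs_le]; constructor <;> linarith

end Det

section SLLN

variable {Ω : Type*} [MeasurableSpace Ω] {μ : Measure Ω} [IsProbabilityMeasure μ]

/-- SLLN for indicator functions of a measurable set, for identically distributed
pairwise independent random variables. -/
lemma slln_indicator (Z : ℕ → Ω → ℝ) (hZmeas : ∀ j, Measurable (Z j))
    (hZindep : Pairwise fun j k => IndepFun (Z j) (Z k) μ)
    (ρ : Measure ℝ) (hlaw : ∀ j, μ.map (Z j) = ρ)
    (s : Set ℝ) (hs : MeasurableSet s) :
    ∀ᵐ ω ∂μ, Tendsto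
      (fun N => (∑ j ∈ Finset.range N, s.indicator (fun _ => (1:ℝ)) (Z j ω)) / N)
      atTop (𝓝 ((ρ s).toReal)) := by
  have : IsProbabilityMeasure ρ := by
    rw [← hlaw 0]
    exact Measure.isProbabilityMeasure_map (hZmeas 0).aemeasurable
  set f : ℝ → ℝ := s.indicator (fun _ => 1) with hf
  have hfm : Measurable f := measurable_const.indicator hs
  have hcomp : ∀ j, (f ∘ Z j) = (Z j ⁻¹' s).indicator (fun _ => (1:ℝ)) := by
    intro j; ext ω; by_cases h : Z j ω ∈ s <;> simp [hf, Set.indicator, Function.comp, h]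
  have key := strong_law_ae_real (fun j => f ∘ Z j)
    (by show Integrable (f ∘ Z 0) μ; rw [hcomp 0]; exact (integrable_const (1:ℝ)).indicator ((hZmeas 0) hs))
    (fun j k hjk => (hZindep hjk).comp hfm hfm)
    (fun j => IdentDistrib.comp ⟨(hZmeas j).aemeasurable, (hZmeas 0).aemeasurable, by
      rw [hlaw j, hlaw 0]⟩ hfm)
  have hint : ∫ x, (f ∘ Z 0) x ∂μ = (ρ s).toReal := by
    rw [hcomp 0, integral_indicator_const (1:ℝ) ((hZmeas 0) hs),
      ← hlaw 0, Measure.map_apply (hZmeas 0) hs]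
    simp
    rfl
  rw [hint] at key
  exact key

end SLLN

lemma quantile_facts (ρ : Measure ℝ) [IsProbabilityMeasure ρ] {c : ℝ}
    (hc0 : 0 < c) (hc1 : c < 1) :
    ∃ x : ℝ, c ≤ (ρ (Set.Iic x)).toReal ∧
      (∀ t, c ≤ (ρ (Set.Iic t)).toReal → x ≤ t) ∧
      (ρ (Set.Iio x)).toReal ≤ c := by
  set F : ℝ → ℝ := fun t => (ρ (Set.Iic t)).toReal with hF
  have hFcdf : ∀ t, F t = cdf ρ t := fun t => (cdf_eq_real ρ t).symm
  have hFmono : Monotone F := fun a b hab =>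
    ENNReal.toReal_mono (measure_ne_top ρ _) (measure_mono (Set.Iic_subset_Iic.2 hab))
  set S : Set ℝ := {t | c ≤ F t} with hS
  have hSne : S.Nonempty := by
    have h := (tendsto_cdf_atTop ρ).eventually (eventually_gt_nhds hc1)
    rcases h.exists with ⟨t, ht⟩
    exact ⟨t, by rw [hS, Set.mem_setOf_eq, hFcdf]; exact ht.le⟩
  have hSbdd : BddBelow S := by
    have h := (tendsto_cdf_atBot ρ).eventually (eventually_lt_nhds hc0)
    rw [eventually_atBot] at h
    rcases h with ⟨T, hT⟩
    refine ⟨T, fun t ht => ?_⟩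
    by_contra hc
    push_neg at hc
    have := hT t hc.le
    rw [← hFcdf] at this
    exact absurd ht (by simp [hS, Set.mem_setOf_eq]; linarith)
  set x := sInf S with hx
  have hxinf : ∀ t, c ≤ F t → x ≤ t := fun t ht => csInf_le hSbdd ht
  have hxlow : c ≤ F x := by
    have hIoi : ∀ t ∈ Set.Ioi x, c ≤ F t := by
      intro t ht
      obtain ⟨s, hsS, hst⟩ := (csInf_lt_iff hSbdd hSne).1 ht
      exact le_trans hsS (hFmono hst.le)
    have hcont : Tendsto (cdf ρ) (𝓝[>] x) (𝓝 (cdf ρ x)) :=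
      ((cdf ρ).right_continuous x).mono_left (nhdsWithin_mono _ Set.Ioi_subset_Ici_self)
    rw [hFcdf]
    refine ge_of_tendsto hcont ?_
    filter_upwards [self_mem_nhdsWithin] with t ht
    rw [← hFcdf]; exact hIoi t ht
  have hup : (ρ (Set.Iio x)).toReal ≤ c := by
    set s : ℕ → Set ℝ := fun j => Set.Iic (x - 1/(j+1)) with hs
    have hmono : Monotone s := by
      intro a b hab
      apply Set.Iic_subset_Iic.2
      have : (1:ℝ)/(b+1) ≤ 1/(a+1) := by
        apply one_div_le_one_div_of_le (by positivity)
        exact_mod_cast by omega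
      linarith
    have hunion : (⋃ j, s j) = Set.Iio x := by
      ext t
      simp only [Set.mem_iUnion, hs, Set.mem_Iic, Set.mem_Iio]
      constructor
      · rintro ⟨j, hj⟩
        have : (0:ℝ) < 1/(j+1) := by positivity
        linarith
      · intro ht
        obtain ⟨j, hj⟩ := exists_nat_one_div_lt (by linarith : (0:ℝ) < x - t)
        exact ⟨j, by push_cast at hj ⊢; linarith⟩
    have htendsto := tendsto_measure_iUnion_atTop (μ := ρ) hmono
    rw [hunion] at htendsto
    have hbound : ∀ j, ρ (s j) ≤ ENNReal.ofReal c := by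
      intro j
      have hnot : F (x - 1/(j+1)) < c := by
        by_contra hcon
        push_neg at hcon
        have := hxinf _ hcon
        have : (0:ℝ) < 1/((j:ℝ)+1) := by positivity
        linarith
      rw [ENNReal.le_ofReal_iff_toReal_le (measure_ne_top ρ _) hc0.le]
      exact hnot.le
    have : ρ (Set.Iio x) ≤ ENNReal.ofReal c :=
      le_of_tendsto htendsto (Eventually.of_forall hbound)
    calc (ρ (Set.Iio x)).toReal ≤ (ENNReal.ofReal c).toReal :=
          ENNReal.toReal_mono ENNReal.ofReal_ne_top this
    _ = c := ENNReal.toReal_ofReal hc0.le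
  exact ⟨x, hxlow, hxinf, hup⟩

section GC
variable {Ω : Type*} [MeasurableSpace Ω] {μ : Measure Ω} [IsProbabilityMeasure μ]

theorem glivenko_cantelli (Z : ℕ → Ω → ℝ) (hZmeas : ∀ j, Measurable (Z j))
    (hZindep : Pairwise fun j k => IndepFun (Z j) (Z k) μ)
    (ρ : Measure ℝ) [IsProbabilityMeasure ρ] (hlaw : ∀ j, μ.map (Z j) = ρ) :
    ∀ᵐ ω ∂μ, Tendsto (fun N => ⨆ t : ℝ,
      |(∑ j ∈ Finset.range N, if Z j ω ≤ t then (1:ℝ) else 0) / N - (ρ (Set.Iic t)).toReal|)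
      atTop (𝓝 0) := by
  set F : ℝ → ℝ := fun t => (ρ (Set.Iic t)).toReal with hF
  have hexists : ∀ r k : ℕ, 1 ≤ k → k ≤ r →
      ∃ x : ℝ, (k:ℝ)/(r+1) ≤ F x ∧ (∀ t, (k:ℝ)/(r+1) ≤ F t → x ≤ t) ∧
        (ρ (Set.Iio x)).toReal ≤ (k:ℝ)/(r+1) := by
    intro r k hk1 hkr
    have hc0 : 0 < (k:ℝ)/(r+1) := by positivity
    have hc1 : (k:ℝ)/(r+1) < 1 := by
      rw [div_lt_one (by positivity)]
      exact_mod_cast by omega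
    exact quantile_facts ρ hc0 hc1
  choose! x hx1 hx2 hx3 using hexists
  have hae1 : ∀ᵐ ω ∂μ, ∀ r k : ℕ, Tendsto
      (fun N => (∑ j ∈ Finset.range N,
        (Set.Iic (x r k)).indicator (fun _ => (1:ℝ)) (Z j ω)) / N)
      atTop (𝓝 (F (x r k))) := by
    rw [ae_all_iff]; intro r; rw [ae_all_iff]; intro k
    exact slln_indicator Z hZmeas hZindep ρ hlaw _ measurableSet_Iic
  have hae2 : ∀ᵐ ω ∂μ, ∀ r k : ℕ, Tendsto
      (fun N => (∑ j ∈ Finset.range N,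
        (Set.Iio (x r k)).indicator (fun _ => (1:ℝ)) (Z j ω)) / N)
      atTop (𝓝 ((ρ (Set.Iio (x r k))).toReal)) := by
    rw [ae_all_iff]; intro r; rw [ae_all_iff]; intro k
    exact slln_indicator Z hZmeas hZindep ρ hlaw _ measurableSet_Iio
  filter_upwards [hae1, hae2] with ω h1 h2
  rw [Metric.tendsto_atTop]
  intro δ hδ
  obtain ⟨r, hr⟩ := exists_nat_one_div_lt (by linarith : (0:ℝ) < δ/2)
  set ε : ℝ := 1/(r+1) with hε
  have hεpos : 0 < ε := by positivity
  -- eventual grid control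
  have hev : ∀ᶠ N in atTop, ∀ k ∈ Finset.Icc 1 r,
      |(∑ j ∈ Finset.range N,
        (Set.Iic (x r k)).indicator (fun _ => (1:ℝ)) (Z j ω)) / N - F (x r k)| < ε ∧
      (∑ j ∈ Finset.range N,
        (Set.Iio (x r k)).indicator (fun _ => (1:ℝ)) (Z j ω)) / N
        < (ρ (Set.Iio (x r k))).toReal + ε := by
    rw [eventually_all_finset]
    intro k _
    have e1 := (Metric.tendsto_nhds.1 (h1 r k)) ε hεpos
    have e2 := (Metric.tendsto_nhds.1 (h2 r k)) ε hεpos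
    filter_upwards [e1, e2] with N hN1 hN2
    rw [Real.dist_eq] at hN1 hN2
    exact ⟨hN1, by cases' abs_lt.1 hN2 with _ h; linarith⟩
  rw [eventually_atTop] at hev
  obtain ⟨N₀, hN₀⟩ := hev
  refine ⟨N₀, fun N hN => ?_⟩
  set G : ℝ → ℝ := fun t => (∑ j ∈ Finset.range N, if Z j ω ≤ t then (1:ℝ) else 0) / N with hG
  set Gm : ℝ → ℝ := fun t => (∑ j ∈ Finset.range N, if Z j ω < t then (1:ℝ) else 0) / N with hGm
  have hGind : ∀ t, G t = (∑ j ∈ Finset.range N,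
      (Set.Iic t).indicator (fun _ => (1:ℝ)) (Z j ω)) / N := by
    intro t
    simp only [hG, Set.indicator_apply, Set.mem_Iic]
  have hGmind : ∀ t, Gm t = (∑ j ∈ Finset.range N,
      (Set.Iio t).indicator (fun _ => (1:ℝ)) (Z j ω)) / N := by
    intro t
    simp only [hGm, Set.indicator_apply, Set.mem_Iio]
  -- hypotheses of gc_det
  have hFmono : Monotone F := fun a b hab =>
    ENNReal.toReal_mono (measure_ne_top ρ _) (measure_mono (Set.Iic_subset_Iic.2 hab))
  have hF0 : ∀ t, 0 ≤ F t := fun t => ENNReal.toReal_nonneg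
  have hF1 : ∀ t, F t ≤ 1 := fun t => by
    rw [hF]
    exact ENNReal.toReal_le_of_le_ofReal one_pos.le (by simpa using prob_le_one)
  have hsum01 : ∀ (f : ℕ → ℝ), (∀ j, f j = 0 ∨ f j = 1) →
      0 ≤ (∑ j ∈ Finset.range N, f j) / N ∧ (∑ j ∈ Finset.range N, f j) / N ≤ 1 := by
    intro f hf
    constructor
    · apply div_nonneg _ (Nat.cast_nonneg N)
      apply Finset.sum_nonneg
      intro j _; rcases hf j with h | h <;> rw [h] <;> norm_num
    · rcases Nat.eq_zero_or_pos N with h0 | hpos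
      · simp [h0]
      · rw [div_le_one (by exact_mod_cast hpos)]
        calc (∑ j ∈ Finset.range N, f j)
            ≤ ∑ j ∈ Finset.range N, 1 := by
              apply Finset.sum_le_sum
              intro j _; rcases hf j with h | h <;> rw [h] <;> norm_num
        _ = N := by simp
  have hite01 : ∀ (p : Prop) [Decidable p], (if p then (1:ℝ) else 0) = 0 ∨
      (if p then (1:ℝ) else 0) = 1 := by
    intro p _; split <;> simp
  have hG0 : ∀ t, 0 ≤ G t := fun t => (hsum01 _ (fun j => hite01 _)).1
  have hG1 : ∀ t, G t ≤ 1 := fun t => (hsum01 _ (fun j => hite01 _)).2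
  have hGmono : Monotone G := by
    intro a b hab
    apply div_le_div_of_nonneg_right ?_ (Nat.cast_nonneg N)
    apply Finset.sum_le_sum
    intro j _
    by_cases h : Z j ω ≤ a
    · simp [h, h.trans hab]
    · simp [h]; split <;> norm_num
  have hGGm : ∀ s t : ℝ, s < t → G s ≤ Gm t := by
    intro s t hst
    apply div_le_div_of_nonneg_right ?_ (Nat.cast_nonneg N)
    apply Finset.sum_le_sum
    intro j _
    by_cases h : Z j ω ≤ s
    · simp [h, lt_of_le_of_lt h hst]
    · simp [h]; split <;> norm_num
  have h1' : (1:ℝ) ≤ ((r:ℝ)+1) * ε := by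
    rw [hε]; field_simp
    exact le_rfl
  have hgrid := hN₀ N hN
  have hGx : ∀ k, 1 ≤ k → k ≤ r → |G (x r k) - F (x r k)| ≤ ε := by
    intro k hk1 hkr
    have := (hgrid k (Finset.mem_Icc.2 ⟨hk1, hkr⟩)).1
    rw [← hGind] at this
    exact this.le
  have hGmx : ∀ k, 1 ≤ k → k ≤ r → Gm (x r k) ≤ (k:ℝ) * ε + ε := by
    intro k hk1 hkr
    have := (hgrid k (Finset.mem_Icc.2 ⟨hk1, hkr⟩)).2
    rw [← hGmind] at this
    have h3 := hx3 r k hk1 hkr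
    have : Gm (x r k) < (k:ℝ)/(r+1) + ε := by linarith
    rw [hε] at *
    calc Gm (x r k) ≤ (k:ℝ)/(r+1) + 1/(r+1) := by linarith
    _ = (k:ℝ) * (1/(r+1)) + 1/(r+1) := by ring
  have hxlow' : ∀ k, 1 ≤ k → k ≤ r → (k:ℝ) * ε ≤ F (x r k) := by
    intro k hk1 hkr
    have := hx1 r k hk1 hkr
    rw [hε]
    calc (k:ℝ) * (1/(r+1)) = (k:ℝ)/(r+1) := by ring
    _ ≤ F (x r k) := this
  have hxinf' : ∀ k, 1 ≤ k → k ≤ r → ∀ t, (k:ℝ) * ε ≤ F t → x r k ≤ t := by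
    intro k hk1 hkr t ht
    apply hx2 r k hk1 hkr
    rw [hε] at ht
    calc (k:ℝ)/(r+1) = (k:ℝ) * (1/(r+1)) := by ring
    _ ≤ F t := ht
  have hbound := gc_det hεpos hFmono hF0 hF1 hG0 hG1 hGmono hGGm h1' hxlow' hxinf' hGx hGmx
  -- conclude
  have hsup_le : (⨆ t : ℝ, |G t - F t|) ≤ 2 * ε := by
    apply ciSup_le
    intro t; exact hbound t
  have hbdd : BddAbove (Set.range fun t : ℝ => |G t - F t|) := by
    refine ⟨2 * ε, ?_⟩
    rintro y ⟨t, rfl⟩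
    exact hbound t
  have hsup_nonneg : 0 ≤ ⨆ t : ℝ, |G t - F t| :=
    le_trans (abs_nonneg _) (le_ciSup hbdd 0)
  rw [Real.dist_eq, sub_zero, abs_of_nonneg hsup_nonneg]
  calc (⨆ t : ℝ, |G t - F t|) ≤ 2 * ε := hsup_le
  _ < δ := by rw [hε]; linarith
end GC

/-- The sup over the reals of `|G - F|` is bounded by the sup over the rationals,
for right-continuous monotone functions. -/
lemma abs_le_rat_sup {F G : ℝ → ℝ} (hF : Monotone F) (hG : Monotone G)
    (hFc : ∀ t : ℝ, Tendsto (fun k : ℕ => F (t + 1/(k+1))) atTop (𝓝 (F t)))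
    (hGc : ∀ t : ℝ, Tendsto (fun k : ℕ => G (t + 1/(k+1))) atTop (𝓝 (G t)))
    (hbd : ∀ t, |G t - F t| ≤ 1) (t : ℝ) :
    |G t - F t| ≤ ⨆ r : ℚ, |G r - F r| := by
  have hbdd : BddAbove (Set.range fun r : ℚ => |G r - F r|) := by
    refine ⟨1, ?_⟩; rintro y ⟨r, rfl⟩; exact hbd r
  have hrk : ∀ k : ℕ, ∃ r : ℚ, t < r ∧ (r:ℝ) < t + 1/(k+1) := by
    intro k
    apply exists_rat_btwn
    have : (0:ℝ) < 1/((k:ℝ)+1) := by positivity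
    linarith
  choose r hr1 hr2 using hrk
  have hFr : Tendsto (fun k => F (r k)) atTop (𝓝 (F t)) := by
    apply tendsto_of_tendsto_of_tendsto_of_le_of_le tendsto_const_nhds (hFc t)
    · intro k; exact hF (hr1 k).le
    · intro k; exact hF (hr2 k).le
  have hGr : Tendsto (fun k => G (r k)) atTop (𝓝 (G t)) := by
    apply tendsto_of_tendsto_of_tendsto_of_le_of_le tendsto_const_nhds (hGc t)
    · intro k; exact hG (hr1 k).le
    · intro k; exact hG (hr2 k).le
  have habs : Tendsto (fun k => |G (r k) - F (r k)|) atTop (𝓝 (|G t - F t|)) :=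
    (hGr.sub hFr).abs
  refine le_of_tendsto habs (Eventually.of_forall fun k => ?_)
  exact le_ciSup hbdd (r k)

/-- Sequential right continuity of a CDF. -/
lemma cdf_right_seq (ρ : Measure ℝ) [IsProbabilityMeasure ρ] (t : ℝ) :
    Tendsto (fun k : ℕ => (ρ (Set.Iic (t + 1/(k+1)))).toReal) atTop
      (𝓝 ((ρ (Set.Iic t)).toReal)) := by
  have heq : ∀ s : ℝ, (ρ (Set.Iic s)).toReal = cdf ρ s := fun s => (cdf_eq_real ρ s).symm
  simp only [heq]
  have hseq : Tendsto (fun k : ℕ => t + 1/((k:ℝ)+1)) atTop (𝓝 t) := by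
    have := tendsto_one_div_add_atTop_nhds_zero_nat (𝕜 := ℝ)
    have h := tendsto_const_nhds (x := t) (f := atTop (α := ℕ)) |>.add this
    simpa using h
  have hcont := ((cdf ρ).right_continuous t).tendsto
  apply hcont.comp
  apply tendsto_nhdsWithin_of_tendsto_nhds_of_eventually_within _ hseq
  filter_upwards with k
  simp only [Set.mem_Ici]
  have : (0:ℝ) < 1/((k:ℝ)+1) := by positivity
  linarith

/-- Sequential right continuity of an empirical CDF. -/
lemma emp_right_seq (a : ℕ → ℝ) (N : ℕ) (t : ℝ) :
    Tendsto (fun k : ℕ => (∑ j ∈ Finset.range N, if a j ≤ t + 1/(k+1) then (1:ℝ) else 0) / N)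
      atTop (𝓝 ((∑ j ∈ Finset.range N, if a j ≤ t then (1:ℝ) else 0) / N)) := by
  apply Tendsto.div_const
  apply tendsto_finset_sum
  intro j _
  by_cases h : a j ≤ t
  · apply Tendsto.congr' _ tendsto_const_nhds
    filter_upwards with k
    have : (0:ℝ) < 1/((k:ℝ)+1) := by positivity
    rw [if_pos h, if_pos (by linarith)]
  · apply Tendsto.congr' _ tendsto_const_nhds
    push_neg at h
    obtain ⟨K, hK⟩ := exists_nat_one_div_lt (by linarith : (0:ℝ) < a j - t)
    rw [eventuallyEq_iff_exists_mem]
    refine ⟨Set.Ici K, Ici_mem_atTop K, fun k hk => ?_⟩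
    have hle : (1:ℝ)/(k+1) ≤ 1/(K+1) := by
      apply one_div_le_one_div_of_le (by positivity)
      have : K ≤ k := hk
      exact_mod_cast by exact Nat.succ_le_succ this
    show (if a j ≤ t then (1:ℝ) else 0) = if a j ≤ t + 1 / ((k:ℝ) + 1) then 1 else 0
    rw [if_neg (not_le.2 h), if_neg (by linarith)]

/-- The empirical CDF of finitely many points is a CDF. -/
lemma isCDF_emp (a : ℕ → ℝ) (N : ℕ) (hN : 0 < N) :
    IsCDF (fun t => (∑ j ∈ Finset.range N, if a j ≤ t then (1:ℝ) else 0) / N) := by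
  refine ⟨(N : ℝ≥0∞)⁻¹ • ∑ j ∈ Finset.range N, Measure.dirac (a j), ⟨?_⟩, ?_⟩
  · rw [Measure.smul_apply, Measure.coe_finset_sum, Finset.sum_apply]
    simp only [measure_univ]
    rw [Finset.sum_const, Finset.card_range, nsmul_eq_mul, mul_one, smul_eq_mul]
    exact ENNReal.inv_mul_cancel (by exact_mod_cast hN.ne') (ENNReal.natCast_ne_top N)
  · intro t
    rw [Measure.smul_apply, Measure.coe_finset_sum, Finset.sum_apply, smul_eq_mul]
    have hdirac : ∀ j, Measure.dirac (a j) (Set.Iic t) = if a j ≤ t then (1:ℝ≥0∞) else 0 := by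
      intro j
      rw [Measure.dirac_apply' _ measurableSet_Iic]
      by_cases h : a j ≤ t <;> simp [Set.indicator, h]
    simp only [hdirac]
    rw [ENNReal.toReal_mul, ENNReal.toReal_sum (fun j _ => by split <;> simp)]
    rw [div_eq_inv_mul]
    congr 1
    · simp
    · apply Finset.sum_congr rfl
      intro j _
      split <;> simp


section Proj
variable {n : ℕ}
local notation "E" => EuclideanSpace ℝ (Fin n)

lemma inner_pair_measurable :
    Measurable (fun p : E × E => (inner ℝ p.1 p.2 : ℝ)) :=
  continuous_inner.measurable

lemma inner_left_measurable (q : E) : Measurable (fun y : E => (inner ℝ q y : ℝ)) :=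
  inner_pair_measurable.comp (measurable_const.prodMk measurable_id)

lemma measProjCDF_eq_map (ν : Measure E) (q : E) (t : ℝ) :
    measProjCDF ν q t = ((ν.map (fun y => (inner ℝ q y : ℝ))) (Set.Iic t)).toReal := by
  rw [measProjCDF, Measure.map_apply (inner_left_measurable q) measurableSet_Iic]
  rfl

lemma measProjCDF_measurable (ν : Measure E) [IsProbabilityMeasure ν] (t : ℝ) :
    Measurable (fun q : E => measProjCDF ν q t) := by
  have hs : MeasurableSet {p : E × E | (inner ℝ p.1 p.2 : ℝ) ≤ t} :=
    measurableSet_le inner_pair_measurable measurable_const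
  have := measurable_measure_prodMk_left (ν := ν) hs
  exact this.ennreal_toReal

/-- The rational-sup discrepancy functional. -/
noncomputable def PsiFn (νX : Measure E) (N : ℕ) (z : E × (ℕ → E)) : ℝ≥0∞ :=
  ⨆ r : ℚ, ENNReal.ofReal
    |(∑ j ∈ Finset.range N, if (inner ℝ z.1 (z.2 j) : ℝ) ≤ (r:ℝ) then (1:ℝ) else 0) / N -
      measProjCDF νX z.1 r|

lemma PsiFn_measurable (νX : Measure E) [IsProbabilityMeasure νX] (N : ℕ) :
    Measurable (PsiFn νX N) := by
  apply Measurable.iSup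
  intro r
  apply Measurable.ennreal_ofReal
  apply Measurable.abs
  apply Measurable.sub
  · apply Measurable.div_const
    apply Finset.measurable_sum
    intro j _
    have hm : Measurable (fun z : E × (ℕ → E) => (inner ℝ z.1 (z.2 j) : ℝ)) :=
      inner_pair_measurable.comp
        (measurable_fst.prodMk ((measurable_pi_apply j).comp measurable_snd))
    exact Measurable.ite (measurableSet_le hm measurable_const)
      measurable_const measurable_const
  · exact (measProjCDF_measurable νX r).comp measurable_fst

noncomputable def LFn (νX : Measure E) (z : E × (ℕ → E)) : ℝ≥0∞ :=
  ⨅ N : ℕ, ⨆ k : ℕ, PsiFn νX (N + k) z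

lemma LFn_measurable (νX : Measure E) [IsProbabilityMeasure νX] :
    Measurable (LFn νX) := by
  apply Measurable.iInf
  intro N
  apply Measurable.iSup
  intro k
  exact PsiFn_measurable νX _

-- basic bounds
lemma emp_nonneg (a : ℕ → ℝ) (N : ℕ) (t : ℝ) :
    0 ≤ (∑ j ∈ Finset.range N, if a j ≤ t then (1:ℝ) else 0) / N := by
  apply div_nonneg _ (Nat.cast_nonneg N)
  apply Finset.sum_nonneg
  intro j _; split <;> norm_num

lemma emp_le_one (a : ℕ → ℝ) (N : ℕ) (t : ℝ) :
    (∑ j ∈ Finset.range N, if a j ≤ t then (1:ℝ) else 0) / N ≤ 1 := by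
  rcases Nat.eq_zero_or_pos N with h0 | hpos
  · simp [h0]
  · rw [div_le_one (by exact_mod_cast hpos)]
    calc (∑ j ∈ Finset.range N, if a j ≤ t then (1:ℝ) else 0)
        ≤ ∑ j ∈ Finset.range N, 1 := by
          apply Finset.sum_le_sum; intro j _; split <;> norm_num
    _ = N := by simp

lemma emp_mono (a : ℕ → ℝ) (N : ℕ) :
    Monotone (fun t => (∑ j ∈ Finset.range N, if a j ≤ t then (1:ℝ) else 0) / N) := by
  intro s t hst
  apply div_le_div_of_nonneg_right ?_ (Nat.cast_nonneg N)
  apply Finset.sum_le_sum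
  intro j _
  by_cases h : a j ≤ s
  · simp [h, h.trans hst]
  · simp [h]; split <;> norm_num

lemma measProjCDF_nonneg (ν : Measure E) (q : E) (t : ℝ) : 0 ≤ measProjCDF ν q t :=
  ENNReal.toReal_nonneg

lemma measProjCDF_le_one (ν : Measure E) [IsProbabilityMeasure ν] (q : E) (t : ℝ) :
    measProjCDF ν q t ≤ 1 := by
  rw [measProjCDF]
  exact ENNReal.toReal_le_of_le_ofReal one_pos.le (by simpa using prob_le_one)

lemma measProjCDF_mono (ν : Measure E) [IsProbabilityMeasure ν] (q : E) :
    Monotone (measProjCDF ν q) := by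
  intro s t hst
  apply ENNReal.toReal_mono (measure_ne_top ν _)
  apply measure_mono
  intro y hy
  exact le_trans hy hst

lemma abs_diff_le_one {a b : ℝ} (ha : 0 ≤ a) (ha1 : a ≤ 1) (hb : 0 ≤ b) (hb1 : b ≤ 1) :
    |a - b| ≤ 1 := by
  rw [abs_le]; constructor <;> linarith

-- ===== new content =====

variable {Ω : Type*} [MeasurableSpace Ω] (μ : Measure Ω) [IsProbabilityMeasure μ]

/-- Main a.s. uniform convergence of projected empirical CDFs with a random direction. -/
theorem emp_sup_tendsto
    (q : Ω → E) (X : ℕ → Ω → E) (hq : Measurable q) (hX : ∀ j, Measurable (X j))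
    (νq νX : Measure E) [IsProbabilityMeasure νq] [IsProbabilityMeasure νX]
    (hq_law : μ.map q = νq) (hX_law : ∀ j, μ.map (X j) = νX)
    (hindep2 : IndepFun q (fun ω j => X j ω) μ)
    (hXindep : Pairwise fun j k => IndepFun (X j) (X k) μ) :
    ∀ᵐ ω ∂μ, Tendsto
      (fun N => ⨆ t : ℝ, |empProjCDF q X N ω t - measProjCDF νX (q ω) t|)
      atTop (𝓝 0) := by
  classical
  set S2 : Ω → (ℕ → E) := fun ω j => X j ω with hS2
  have hS2m : Measurable S2 := measurable_pi_lambda _ (fun j => hX j)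
  set ξ : Measure (ℕ → E) := μ.map S2 with hξ
  have : IsProbabilityMeasure ξ := Measure.isProbabilityMeasure_map hS2m.aemeasurable
  -- Step A+B : for every fixed direction, a.e. LFn vanishes
  have hAB : ∀ q' : E, ∀ᵐ ω ∂μ, LFn νX (q', S2 ω) = 0 := by
    intro q'
    set f : E → ℝ := fun y => (inner ℝ q' y : ℝ) with hf
    have hfm : Measurable f := inner_left_measurable q'
    set ρ : Measure ℝ := νX.map f with hρ
    have : IsProbabilityMeasure ρ := Measure.isProbabilityMeasure_map hfm.aemeasurable
    have hlaw : ∀ j, μ.map (fun ω => f (X j ω)) = ρ := by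
      intro j
      rw [hρ, ← hX_law j, Measure.map_map hfm (hX j)]
      rfl
    have hgc := glivenko_cantelli (fun j ω => f (X j ω))
      (fun j => hfm.comp (hX j))
      (fun j k hjk => (hXindep hjk).comp hfm hfm)
      ρ hlaw
    have hρIic : ∀ t : ℝ, (ρ (Set.Iic t)).toReal = measProjCDF νX q' t := by
      intro t
      rw [measProjCDF_eq_map]
    filter_upwards [hgc] with ω hω
    -- from sup over ℝ convergence to LFn = 0
    set G : ℕ → ℝ → ℝ := fun N t =>
      (∑ j ∈ Finset.range N, if f (X j ω) ≤ t then (1:ℝ) else 0) / N with hG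
    set u : ℕ → ℝ := fun N => ⨆ t : ℝ, |G N t - (ρ (Set.Iic t)).toReal| with hu
    have hbddu : ∀ N, BddAbove (Set.range fun t : ℝ => |G N t - (ρ (Set.Iic t)).toReal|) := by
      intro N
      refine ⟨1, ?_⟩
      rintro y ⟨t, rfl⟩
      exact abs_diff_le_one (emp_nonneg _ _ _) (emp_le_one _ _ _)
        ENNReal.toReal_nonneg (by
          exact ENNReal.toReal_le_of_le_ofReal one_pos.le (by simpa using prob_le_one))
    have hPsi_le : ∀ N, PsiFn νX N (q', S2 ω) ≤ ENNReal.ofReal (u N) := by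
      intro N
      apply iSup_le
      intro r
      apply ENNReal.ofReal_le_ofReal
      have : |G N r - (ρ (Set.Iic r)).toReal| ≤ u N := le_ciSup (hbddu N) (r:ℝ)
      rw [hρIic] at this
      exact this
    suffices h : LFn νX (q', S2 ω) = 0 by exact h
    apply le_antisymm _ zero_le
    apply ENNReal.le_of_forall_pos_le_add
    intro ε hε _
    rw [zero_add]
    have hev : ∀ᶠ N in atTop, u N < (ε:ℝ) := by
      have := Metric.tendsto_nhds.1 hω (ε:ℝ) (by exact_mod_cast hε)
      filter_upwards [this] with N hN
      rw [Real.dist_eq, sub_zero] at hN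
      calc u N ≤ |u N| := le_abs_self _
      _ < ε := hN
    rw [eventually_atTop] at hev
    obtain ⟨N₀, hN₀⟩ := hev
    calc LFn νX (q', S2 ω) ≤ ⨆ k, PsiFn νX (N₀ + k) (q', S2 ω) := iInf_le _ N₀
    _ ≤ (ε : ℝ≥0∞) := by
        apply iSup_le
        intro k
        calc PsiFn νX (N₀ + k) (q', S2 ω) ≤ ENNReal.ofReal (u (N₀ + k)) := hPsi_le _
        _ ≤ ENNReal.ofReal (ε:ℝ) := ENNReal.ofReal_le_ofReal (hN₀ _ (Nat.le_add_right _ _)).le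
        _ = (ε : ℝ≥0∞) := ENNReal.ofReal_coe_nnreal
  -- Step C : transfer to ξ
  have hC : ∀ q' : E, ∀ᵐ xs ∂ξ, LFn νX (q', xs) = 0 := by
    intro q'
    rw [hξ, ae_map_iff hS2m.aemeasurable]
    · exact hAB q'
    · exact ((LFn_measurable νX).comp measurable_prodMk_left) (measurableSet_singleton 0)
  -- Step D : product law
  have hD : μ.map (fun ω => (q ω, S2 ω)) = νq.prod ξ := by
    rw [(indepFun_iff_map_prod_eq_prod_map_map hq.aemeasurable hS2m.aemeasurable).1 hindep2,
      hq_law]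
  -- Step E+F : a.e. in Ω
  have hEF : ∀ᵐ ω ∂μ, LFn νX (q ω, S2 ω) = 0 := by
    apply ae_of_ae_map (p := fun z => LFn νX z = 0)
      (hq.prodMk hS2m).aemeasurable
    rw [hD, MeasureTheory.Measure.ae_prod_iff_ae_ae]
    · exact Eventually.of_forall fun q' => hC q'
    · exact (LFn_measurable νX) (measurableSet_singleton 0)
  -- Step G : conclude
  filter_upwards [hEF] with ω hω
  set q' := q ω with hq'
  set ρ : Measure ℝ := νX.map (fun y => (inner ℝ q' y : ℝ)) with hρ
  have : IsProbabilityMeasure ρ :=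
    Measure.isProbabilityMeasure_map (inner_left_measurable q').aemeasurable
  set Ψ : ℕ → ℝ≥0∞ := fun N => PsiFn νX N (q', S2 ω) with hΨ
  -- Ψ tends to 0
  have hΨ_anti : Antitone (fun N => ⨆ k, PsiFn νX (N + k) (q', S2 ω)) := by
    intro N M hNM
    apply iSup_le
    intro k
    have : M + k = N + (M - N + k) := by omega
    rw [this]
    exact le_iSup (fun k => PsiFn νX (N + k) (q', S2 ω)) _
  have hΨv : Tendsto (fun N => ⨆ k, PsiFn νX (N + k) (q', S2 ω)) atTop (𝓝 0) := by
    have := tendsto_atTop_iInf hΨ_anti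
    rwa [show (⨅ N, ⨆ k, PsiFn νX (N + k) (q', S2 ω)) = 0 from hω] at this
  have hΨ0 : Tendsto Ψ atTop (𝓝 0) := by
    apply tendsto_of_tendsto_of_tendsto_of_le_of_le tendsto_const_nhds hΨv
    · intro N; exact zero_le
    · intro N
      have h0 : Ψ N = PsiFn νX (N + 0) (q', S2 ω) := by rw [Nat.add_zero]
      rw [h0]
      exact le_iSup (fun k => PsiFn νX (N + k) (q', S2 ω)) 0
  have hΨne : ∀ N, Ψ N ≠ ⊤ := by
    intro N
    have : Ψ N ≤ ENNReal.ofReal 1 := by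
      apply iSup_le
      intro r
      apply ENNReal.ofReal_le_ofReal
      apply abs_diff_le_one (emp_nonneg _ _ _) (emp_le_one _ _ _)
        (measProjCDF_nonneg _ _ _) (measProjCDF_le_one _ _ _)
    exact (lt_of_le_of_lt this ENNReal.ofReal_lt_top).ne
  have hΨtoReal : Tendsto (fun N => (Ψ N).toReal) atTop (𝓝 0) := by
    have h := (ENNReal.tendsto_toReal (by simp : (0:ℝ≥0∞) ≠ ⊤)).comp hΨ0
    simpa [Function.comp_def] using h
  -- compare real sups
  have hkey : ∀ N, (⨆ t : ℝ, |empProjCDF q X N ω t - measProjCDF νX q' t|) ≤ (Ψ N).toReal := by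
    intro N
    apply ciSup_le
    intro t
    set a : ℕ → ℝ := fun j => (inner ℝ q' (X j ω) : ℝ) with ha
    have hGdef : ∀ s : ℝ, empProjCDF q X N ω s
        = (∑ j ∈ Finset.range N, if a j ≤ s then (1:ℝ) else 0) / N := by
      intro s; rfl
    have hFdef : ∀ s : ℝ, measProjCDF νX q' s = (ρ (Set.Iic s)).toReal := by
      intro s; rw [measProjCDF_eq_map]
    have step1 : |empProjCDF q X N ω t - measProjCDF νX q' t| ≤
        ⨆ r : ℚ, |empProjCDF q X N ω r - measProjCDF νX q' r| := by
      apply abs_le_rat_sup (measProjCDF_mono νX q')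
      · intro s₁ s₂ h12
        rw [hGdef s₁, hGdef s₂]
        exact emp_mono a N h12
      · intro s
        simp only [hFdef]
        exact cdf_right_seq ρ s
      · intro s
        simp only [hGdef]
        exact emp_right_seq a N s
      · intro s
        exact abs_diff_le_one (emp_nonneg _ _ _) (emp_le_one _ _ _)
          (measProjCDF_nonneg _ _ _) (measProjCDF_le_one _ _ _)
    refine step1.trans ?_
    apply ciSup_le
    intro r
    have h1 : |empProjCDF q X N ω r - measProjCDF νX q' r|
        = (ENNReal.ofReal |empProjCDF q X N ω r - measProjCDF νX q' r|).toReal :=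
      (ENNReal.toReal_ofReal (abs_nonneg _)).symm
    rw [h1]
    apply ENNReal.toReal_mono (hΨne N)
    exact le_iSup (fun r : ℚ => ENNReal.ofReal
      |(∑ j ∈ Finset.range N, if (inner ℝ q' (S2 ω j) : ℝ) ≤ (r:ℝ) then (1:ℝ) else 0) / N -
        measProjCDF νX q' r|) r
  have hnonneg : ∀ N, 0 ≤ ⨆ t : ℝ, |empProjCDF q X N ω t - measProjCDF νX q' t| := by
    intro N
    have hbdd : BddAbove (Set.range fun t : ℝ =>
        |empProjCDF q X N ω t - measProjCDF νX q' t|) := by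
      refine ⟨1, ?_⟩
      rintro y ⟨t, rfl⟩
      exact abs_diff_le_one (emp_nonneg _ _ _) (emp_le_one _ _ _)
        (measProjCDF_nonneg _ _ _) (measProjCDF_le_one _ _ _)
    exact le_trans (abs_nonneg _) (le_ciSup hbdd 0)
  exact tendsto_of_tendsto_of_tendsto_of_le_of_le tendsto_const_nhds hΨtoReal hnonneg hkey

end Proj

lemma variance_congr_ae {Ω : Type*} [MeasurableSpace Ω] {μ : Measure Ω} {f g : Ω → ℝ}
    (h : f =ᵐ[μ] g) : variance f μ = variance g μ := by
  rw [ProbabilityTheory.variance, ProbabilityTheory.variance]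
  congr 1
  rw [ProbabilityTheory.evariance, ProbabilityTheory.evariance]
  have hint : μ[f] = μ[g] := integral_congr_ae h
  rw [hint]
  apply lintegral_congr_ae
  filter_upwards [h] with ω hω
  rw [hω]

lemma variance_comp_map {α Ω : Type*} [MeasurableSpace Ω] [MeasurableSpace α]
    {μ : Measure Ω} {X : Ω → α} {f : α → ℝ} (hX : Measurable X) (hf : Measurable f) :
    variance (fun ω => f (X ω)) μ = variance f (μ.map X) := by
  have hi : ∫ x, f x ∂(μ.map X) = ∫ ω, f (X ω) ∂μ :=
    integral_map hX.aemeasurable hf.aestronglyMeasurable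
  rw [ProbabilityTheory.variance, ProbabilityTheory.variance,
    ProbabilityTheory.evariance, ProbabilityTheory.evariance, hi]
  congr 1
  rw [lintegral_map ?_ hX]
  exact ((hf.sub measurable_const).nnnorm.coe_nnreal_ennreal).pow_const 2

variable {Ω E' : Type*} [MeasurableSpace Ω] [MeasurableSpace E'] {μ : Measure Ω} {H : ℕ}

lemma indep_extract (q : Fin H → Ω → E') (X : Fin H → ℕ → Ω → E')
    (hq_meas : ∀ i, Measurable (q i)) (hX_meas : ∀ i j, Measurable (X i j))
    (hindep : iIndepFun
      (Sum.elim (fun i => q i) (fun p : Fin H × ℕ => X p.1 p.2)) μ) (i : Fin H) :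
    IndepFun (q i) (fun ω (j : ℕ) => X i j ω) μ := by
  classical
  set f := Sum.elim (fun i => q i) (fun p : Fin H × ℕ => X p.1 p.2) with hf
  have h_le : ∀ k, MeasurableSpace.comap (f k) inferInstance ≤ (by infer_instance) := by
    intro k
    cases k with
    | inl a => exact (hq_meas a).comap_le
    | inr p => exact (hX_meas p.1 p.2).comap_le
  have hdisj : Disjoint ({Sum.inl i} : Set (Fin H ⊕ Fin H × ℕ))
      (Set.range fun j : ℕ => Sum.inr (i, j)) := by
    rw [Set.disjoint_left]
    rintro k rfl ⟨j, hj⟩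
    exact absurd hj (by simp)
  have hI := indep_iSup_of_disjoint h_le hindep.iIndep hdisj
  rw [IndepFun_iff]
  intro t1 t2 h1 h2
  refine (Indep_iff _ _ _).1 hI t1 t2 ?_ ?_
  · have hle1 : MeasurableSpace.comap (q i) inferInstance ≤
        ⨆ k ∈ ({Sum.inl i} : Set (Fin H ⊕ Fin H × ℕ)),
          MeasurableSpace.comap (f k) inferInstance := by
      rw [iSup_singleton]
      exact le_rfl
    exact hle1 _ h1
  · have hle2 : MeasurableSpace.comap (fun ω => (fun j : ℕ => X i j ω))
        MeasurableSpace.pi ≤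
        ⨆ k ∈ (Set.range fun j : ℕ => Sum.inr (i, j) :
            Set (Fin H ⊕ Fin H × ℕ)), MeasurableSpace.comap (f k) inferInstance := by
      have hpi : (MeasurableSpace.pi : MeasurableSpace (ℕ → E')) =
          ⨆ j : ℕ, MeasurableSpace.comap (fun g : ℕ → E' => g j) inferInstance := rfl
      rw [hpi, MeasurableSpace.comap_iSup]
      apply iSup_le
      intro j
      rw [MeasurableSpace.comap_comp]
      have hcomp : ((fun g : ℕ → E' => g j) ∘ (fun ω => fun j : ℕ => X i j ω)) = X i j := rfl
      rw [hcomp]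
      have := le_biSup (f := fun k : Fin H ⊕ Fin H × ℕ => MeasurableSpace.comap (f k) inferInstance)
        (s := Set.range fun j : ℕ => Sum.inr (i, j))
        (i := Sum.inr (i, j)) (Set.mem_range.2 ⟨j, rfl⟩)
      exact this
    exact hle2 _ h2

lemma isCDF_measProjCDF {n : ℕ} (ν : Measure (EuclideanSpace ℝ (Fin n)))
    [IsProbabilityMeasure ν] (q : EuclideanSpace ℝ (Fin n)) :
    IsCDF (measProjCDF ν q) :=
  ⟨ν.map (fun y => (inner ℝ q y : ℝ)),
    Measure.isProbabilityMeasure_map (inner_left_measurable q).aemeasurable,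
    fun t => measProjCDF_eq_map ν q t⟩

lemma isCDF_empProjCDF {n : ℕ} {Ω : Type*} {q : Ω → EuclideanSpace ℝ (Fin n)}
    {X : ℕ → Ω → EuclideanSpace ℝ (Fin n)} {N : ℕ} {ω : Ω} (hN : 0 < N) :
    IsCDF (empProjCDF q X N ω) :=
  isCDF_emp (fun j => (inner ℝ (q ω) (X j ω) : ℝ)) N hN

lemma avg_abs_bound {H : ℕ} (hH : 0 < H) {f : Fin H → ℝ} {M : ℝ}
    (h1 : ∀ i, 0 ≤ f i) (h2 : ∀ i, f i ≤ M) :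
    |(1/(H:ℝ)) * ∑ i, f i| ≤ M := by
  have hHpos : (0:ℝ) < H := by exact_mod_cast hH
  have hs0 : 0 ≤ ∑ i, f i := Finset.sum_nonneg fun i _ => h1 i
  have hsM : ∑ i, f i ≤ H * M := by
    calc ∑ i, f i ≤ ∑ _i : Fin H, M := Finset.sum_le_sum fun i _ => h2 i
    _ = H * M := by simp [Finset.sum_const, Finset.card_univ, mul_comm]
  rw [abs_of_nonneg (by positivity)]
  rw [div_mul_eq_mul_div, one_mul, div_le_iff₀ hHpos]
  linarith [hsM]

end Helpers

/-- **Asymptotic variance of the estimator `Δ̂(X,Y)`**: with `(q_i)_{i=1}^H` i.i.d. copies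
of the direction `q` (with law `νq` on the unit sphere), `(X_{i,j})` i.i.d. copies of `X`
(with law `νX`), all mutually independent, and `d(·,g)` continuous with respect to the
sup-norm in its first argument and bounded above uniformly by `M` for all CDFs `g`,
`Var[Δ̂(X,Y)] → (1/H)·Var_q[d(F_X^q, F_Y^q)]` as `N → ∞`. -/

theorem estimator_asymptotic_variance {n : ℕ}
    {Ω : Type*} [MeasurableSpace Ω] (μ : Measure Ω) [IsProbabilityMeasure μ]
    (H : ℕ) (hH : 0 < H)
    (q : Fin H → Ω → EuclideanSpace ℝ (Fin n))
    (X : Fin H → ℕ → Ω → EuclideanSpace ℝ (Fin n))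
    (hq_meas : ∀ i, Measurable (q i)) (hX_meas : ∀ i j, Measurable (X i j))
    (νq νX νY : Measure (EuclideanSpace ℝ (Fin n)))
    [IsProbabilityMeasure νq] [IsProbabilityMeasure νX] [IsProbabilityMeasure νY]
    (hq_law : ∀ i, μ.map (q i) = νq) (hX_law : ∀ i j, μ.map (X i j) = νX)
    (hq_sphere : ∀ i ω, q i ω ∈ Metric.sphere (0 : EuclideanSpace ℝ (Fin n)) 1)
    (hindep : iIndepFun
      (Sum.elim (fun i => q i) (fun p : Fin H × ℕ => X p.1 p.2)) μ)
    (d : (ℝ → ℝ) → (ℝ → ℝ) → ℝ) (M : ℝ)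
    (hd_cont : ∀ (g f : ℝ → ℝ) (fs : ℕ → ℝ → ℝ), IsCDF g → IsCDF f → (∀ k, IsCDF (fs k)) →
      Tendsto (fun k => ⨆ x, |fs k x - f x|) atTop (nhds 0) →
      Tendsto (fun k => d (fs k) g) atTop (nhds (d f g)))
    (hd_nonneg : ∀ f g : ℝ → ℝ, IsCDF f → IsCDF g → 0 ≤ d f g)
    (hd_bdd : ∀ f g : ℝ → ℝ, IsCDF f → IsCDF g → d f g ≤ M)
    (hmeas_est : ∀ (N : ℕ) (i : Fin H), AEStronglyMeasurable
      (fun ω => d (empProjCDF (q i) (X i) N ω) (measProjCDF νY (q i ω))) μ)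
    (hmeas_lim : AEStronglyMeasurable
      (fun qt => d (measProjCDF νX qt) (measProjCDF νY qt)) νq) :
    Tendsto
      (fun N => variance (fun ω => (1 / (H : ℝ)) *
        ∑ i, d (empProjCDF (q i) (X i) N ω) (measProjCDF νY (q i ω))) μ)
      atTop
      (nhds ((1 / (H : ℝ)) *
        variance (fun qt => d (measProjCDF νX qt) (measProjCDF νY qt)) νq)) := by
  classical
  have hCDFX : ∀ q', IsCDF (measProjCDF νX q') := fun q' => isCDF_measProjCDF νX q'
  have hCDFY : ∀ q', IsCDF (measProjCDF νY q') := fun q' => isCDF_measProjCDF νY q'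
  have hgbd : ∀ q', 0 ≤ d (measProjCDF νX q') (measProjCDF νY q') ∧
      d (measProjCDF νX q') (measProjCDF νY q') ≤ M :=
    fun q' => ⟨hd_nonneg _ _ (hCDFX q') (hCDFY q'), hd_bdd _ _ (hCDFX q') (hCDFY q')⟩
  have hM0 : 0 ≤ M := le_trans (hgbd 0).1 (hgbd 0).2
  -- Step 1: per-i sup convergence
  have hsup : ∀ i : Fin H, ∀ᵐ ω ∂μ, Tendsto
      (fun N => ⨆ t : ℝ, |empProjCDF (q i) (X i) N ω t - measProjCDF νX (q i ω) t|)
      atTop (𝓝 0) := by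
    intro i
    apply emp_sup_tendsto μ (q i) (X i) (hq_meas i) (hX_meas i) νq νX (hq_law i) (hX_law i)
    · exact indep_extract q X hq_meas hX_meas hindep i
    · intro j k hjk
      exact hindep.indepFun
        (show (Sum.inr (i,j) : Fin H ⊕ Fin H × ℕ) ≠ Sum.inr (i,k) by simp [hjk])
  -- Step 2: a.s. convergence of the estimator terms
  have hZconv : ∀ᵐ ω ∂μ, ∀ i : Fin H, Tendsto
      (fun N => d (empProjCDF (q i) (X i) N ω) (measProjCDF νY (q i ω))) atTop
      (𝓝 (d (measProjCDF νX (q i ω)) (measProjCDF νY (q i ω)))) := by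
    rw [ae_all_iff]
    intro i
    filter_upwards [hsup i] with ω hω
    apply (tendsto_add_atTop_iff_nat 1).1
    apply hd_cont (measProjCDF νY (q i ω)) (measProjCDF νX (q i ω))
      (fun k => empProjCDF (q i) (X i) (k+1) ω) (hCDFY _) (hCDFX _)
      (fun k => isCDF_empProjCDF (Nat.succ_pos k))
    exact (tendsto_add_atTop_iff_nat 1).2 hω
  have hSconv : ∀ᵐ ω ∂μ, Tendsto (fun N => (1/(H:ℝ)) *
      ∑ i, d (empProjCDF (q i) (X i) N ω) (measProjCDF νY (q i ω))) atTop
      (𝓝 ((1/(H:ℝ)) * ∑ i, d (measProjCDF νX (q i ω)) (measProjCDF νY (q i ω)))) := by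
    filter_upwards [hZconv] with ω hω
    exact (tendsto_finset_sum _ (fun i _ => hω i)).const_mul _
  -- notation
  set SN : ℕ → Ω → ℝ := fun N ω => (1/(H:ℝ)) *
    ∑ i, d (empProjCDF (q i) (X i) N ω) (measProjCDF νY (q i ω)) with hSNdef
  set SL : Ω → ℝ := fun ω => (1/(H:ℝ)) *
    ∑ i, d (measProjCDF νX (q i ω)) (measProjCDF νY (q i ω)) with hSLdef
  -- measurability & bounds
  have hSNmeas : ∀ N, AEStronglyMeasurable (SN N) μ := fun N =>
    (Finset.aestronglyMeasurable_fun_sum _ (fun i _ => hmeas_est N i)).const_mul _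
  have hSNbd : ∀ N ω, 0 < N → |SN N ω| ≤ M := by
    intro N ω hN
    exact avg_abs_bound hH
      (fun i => hd_nonneg _ _ (isCDF_empProjCDF hN) (hCDFY _))
      (fun i => hd_bdd _ _ (isCDF_empProjCDF hN) (hCDFY _))
  have hSLbd : ∀ ω, |SL ω| ≤ M := fun ω =>
    avg_abs_bound hH (fun i => (hgbd _).1) (fun i => (hgbd _).2)
  have hSLmeas : AEStronglyMeasurable SL μ := by
    apply AEStronglyMeasurable.const_mul
    apply Finset.aestronglyMeasurable_fun_sum
    intro i _
    have h1 : AEStronglyMeasurable (fun qt => d (measProjCDF νX qt) (measProjCDF νY qt))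
        (μ.map (q i)) := by rw [hq_law i]; exact hmeas_lim
    exact h1.comp_aemeasurable (hq_meas i).aemeasurable
  -- moments via dominated convergence
  have hSconv1 : ∀ᵐ ω ∂μ, Tendsto (fun N => SN (N+1) ω) atTop (𝓝 (SL ω)) := by
    filter_upwards [hSconv] with ω hω
    exact (tendsto_add_atTop_iff_nat 1).2 hω
  have hint1 : Tendsto (fun N => ∫ ω, SN (N+1) ω ∂μ) atTop (𝓝 (∫ ω, SL ω ∂μ)) := by
    apply tendsto_integral_of_dominated_convergence (fun _ => M)
      (fun N => hSNmeas (N+1)) (integrable_const M)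
      (fun N => Eventually.of_forall fun ω => by
        rw [Real.norm_eq_abs]; exact hSNbd (N+1) ω (Nat.succ_pos N))
      hSconv1
  have hint2 : Tendsto (fun N => ∫ ω, (SN (N+1) ω)^2 ∂μ) atTop (𝓝 (∫ ω, (SL ω)^2 ∂μ)) := by
    apply tendsto_integral_of_dominated_convergence (fun _ => M^2)
      (fun N => by
        have := (hSNmeas (N+1)).mul (hSNmeas (N+1))
        simpa [← pow_two, Pi.pow_def] using this)
      (integrable_const (M^2))
      (fun N => Eventually.of_forall fun ω => by
        rw [Real.norm_eq_abs, abs_pow, ← sq_abs]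
        have := hSNbd (N+1) ω (Nat.succ_pos N)
        rw [sq_abs, ← abs_pow]
        calc |SN (N+1) ω ^ 2| = |SN (N+1) ω|^2 := abs_pow _ 2
        _ ≤ M^2 := by
            apply pow_le_pow_left₀ (abs_nonneg _) this)
      (by filter_upwards [hSconv1] with ω hω; exact hω.pow 2)
  -- variance formulas
  have hmem : ∀ N, MemLp (SN (N+1)) 2 μ := fun N =>
    MemLp.of_bound (hSNmeas (N+1)) M (Eventually.of_forall fun ω => by
      rw [Real.norm_eq_abs]; exact hSNbd (N+1) ω (Nat.succ_pos N))
  have hmemL : MemLp SL 2 μ :=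
    MemLp.of_bound hSLmeas M (Eventually.of_forall fun ω => by
      rw [Real.norm_eq_abs]; exact hSLbd ω)
  have hvarN : ∀ N, variance (SN (N+1)) μ
      = (∫ ω, (SN (N+1) ω)^2 ∂μ) - (∫ ω, SN (N+1) ω ∂μ)^2 := by
    intro N
    rw [variance_eq_sub (hmem N)]
    simp only [Pi.pow_apply]
  have hvarL : variance SL μ = (∫ ω, (SL ω)^2 ∂μ) - (∫ ω, SL ω ∂μ)^2 := by
    rw [variance_eq_sub hmemL]
    simp only [Pi.pow_apply]
  have hvartendsto : Tendsto (fun N => variance (SN (N+1)) μ) atTop (𝓝 (variance SL μ)) := by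
    rw [hvarL]
    simp only [hvarN]
    exact hint2.sub (hint1.pow 2)
  -- identify the limit variance
  set g : EuclideanSpace ℝ (Fin n) → ℝ :=
    fun qt => d (measProjCDF νX qt) (measProjCDF νY qt) with hgdef
  set g' : EuclideanSpace ℝ (Fin n) → ℝ := hmeas_lim.mk _ with hg'def
  have hg'meas : Measurable g' := hmeas_lim.stronglyMeasurable_mk.measurable
  have hae : g =ᵐ[νq] g' := hmeas_lim.ae_eq_mk
  have hcomp : ∀ i : Fin H, (fun ω => g (q i ω)) =ᵐ[μ] (fun ω => g' (q i ω)) := by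
    intro i
    apply ae_of_ae_map (p := fun y => g y = g' y) (hq_meas i).aemeasurable
    rw [hq_law i]
    exact hae
  have hSL_ae : SL =ᵐ[μ] (fun ω => (1/(H:ℝ)) * ∑ i, g' (q i ω)) := by
    have hall : ∀ᵐ ω ∂μ, ∀ i : Fin H, g (q i ω) = g' (q i ω) := ae_all_iff.2 hcomp
    filter_upwards [hall] with ω hω
    rw [hSLdef]
    simp only
    congr 1
    exact Finset.sum_congr rfl fun i _ => hω i
  have hfun_eq : (fun ω => ∑ i : Fin H, g' (q i ω))
      = ∑ i : Fin H, (fun ω => g' (q i ω)) := by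
    funext ω
    simp [Finset.sum_apply]
  have hmem' : ∀ i ∈ Finset.univ, MemLp (fun ω => g' (q i ω)) 2 μ := by
    intro i _
    apply MemLp.of_bound ((hg'meas.comp (hq_meas i)).aestronglyMeasurable) M
    filter_upwards [hcomp i] with ω hω
    show |g' (q i ω)| ≤ M
    have hω' : g (q i ω) = g' (q i ω) := hω
    rw [← hω']
    have hb := hgbd (q i ω)
    rw [abs_of_nonneg hb.1]
    exact hb.2
  have hpair : ((Finset.univ : Finset (Fin H)) : Set (Fin H)).Pairwise
      (fun i j => IndepFun (fun ω => g' (q i ω)) (fun ω => g' (q j ω)) μ) := by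
    intro i _ j _ hij
    have h := hindep.indepFun
      (show (Sum.inl i : Fin H ⊕ Fin H × ℕ) ≠ Sum.inl j by simpa using hij)
    exact h.comp hg'meas hg'meas
  have hvar_id : variance SL μ = (1/(H:ℝ)) * variance g νq := by
    have h1 : variance SL μ = variance (fun ω => (1/(H:ℝ)) * ∑ i, g' (q i ω)) μ :=
      variance_congr_ae hSL_ae
    have h2 : variance (fun ω => (1/(H:ℝ)) * ∑ i, g' (q i ω)) μ
        = (1/(H:ℝ))^2 * variance (fun ω => ∑ i, g' (q i ω)) μ :=
      variance_const_mul _ _ _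
    have h3 : variance (fun ω => ∑ i : Fin H, g' (q i ω)) μ
        = ∑ i : Fin H, variance (fun ω => g' (q i ω)) μ := by
      rw [hfun_eq]
      exact IndepFun.variance_sum hmem' hpair
    have h4 : ∀ i : Fin H, variance (fun ω => g' (q i ω)) μ = variance g νq := by
      intro i
      rw [variance_comp_map (hq_meas i) hg'meas, hq_law i]
      exact variance_congr_ae hae.symm
    have hHne : (H:ℝ) ≠ 0 := Nat.cast_ne_zero.2 hH.ne'
    rw [h1, h2, h3]
    simp only [h4]
    rw [Finset.sum_const, Finset.card_univ, Fintype.card_fin, nsmul_eq_mul]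
    field_simp
  -- glue
  apply (tendsto_add_atTop_iff_nat 1).1
  have : (1 / (H : ℝ)) * variance g νq = variance SL μ := hvar_id.symm
  rw [show (nhds ((1 / (H : ℝ)) * variance
      (fun qt => d (measProjCDF νX qt) (measProjCDF νY qt)) νq))
    = 𝓝 (variance SL μ) by rw [← this]]
  exact hvartendsto
end
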